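/- arXiv:1205.3533 — 6 statements merged into one kernel-verified Lean document; each statement's English description precedes it below -/
import Mathlib

section
/- Let G be a group and C a class of groups. The following are equivalent: (1) G is approximable by C; (2) G embeds into an ultraproduct of members of C (i.e. there exist an index set I, an ultrafilter U on I and groups C_i in C such that G embeds into the ultraproduct of the C_i with respect to U); (3) G satisfies every universal first-order sentence in the language of groups that is true in all members of C; (4) every finitely generated subgroup of G is approximable by C. -/
open FirstOrder

/-- The first-order language of groups: one constant (the identity), one unary function
symbol (inversion), one binary function symbol (multiplication) and no relation symbols. -/
def GroupLang : FirstOrder.Language where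
  Functions := fun n =>
    match n with
    | 0 => Unit
    | 1 => Unit
    | 2 => Unit
    | _ => Empty
  Relations := fun _ => Empty

/-- Every group is a structure for the language of groups in the natural way. -/
instance groupLangStructure (G : Type*) [Group G] : GroupLang.Structure G where
  funMap := fun {n} f x =>
    match n, f, x with
    | 0, _, _ => 1
    | 1, _, x => (x 0)⁻¹
    | 2, _, x => x 0 * x 1
  RelMap := fun {n} r _ => r.elim

/-- The setoid on the product of a family of types given by eventual equality along an
ultrafilter. -/
def uprodSetoid {ι : Type*} (𝒰 : Ultrafilter ι) (G : ι → Type*) : Setoid (∀ i, G i) where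
  r f g := ∀ᶠ i in (𝒰 : Filter ι), f i = g i
  iseqv :=
    ⟨fun _ => Filter.Eventually.of_forall fun _ => rfl,
     fun h => h.mono fun _ hi => hi.symm,
     fun h₁ h₂ => h₂.mp (h₁.mono fun _ hi hi' => hi.trans hi')⟩

theorem uprodSetoid_ev {ι : Type*} {𝒰 : Ultrafilter ι} {G : ι → Type*} {f g : ∀ i, G i}
    (h : (uprodSetoid 𝒰 G).r f g) : ∀ᶠ i in (𝒰 : Filter ι), f i = g i := h

/-- The ultraproduct of a family of types with respect to an ultrafilter. -/
def UProd {ι : Type*} (𝒰 : Ultrafilter ι) (G : ι → Type*) : Type _ :=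
  Quotient (uprodSetoid 𝒰 G)

/-- The class of an element of the product in the ultraproduct. -/
def UProd.mk {ι : Type*} (𝒰 : Ultrafilter ι) (G : ι → Type*) (f : ∀ i, G i) :
    UProd 𝒰 G :=
  Quotient.mk (uprodSetoid 𝒰 G) f

/-- An ultraproduct of groups is a group, with coordinatewise operations. -/
instance UProd.instGroup {ι : Type*} (𝒰 : Ultrafilter ι) (G : ι → Type*)
    [∀ i, Group (G i)] : Group (UProd 𝒰 G) where
  mul := Quotient.map₂ (fun f g i => f i * g i)
    (fun f f' h₁ g g' h₂ => (uprodSetoid_ev h₂).mp ((uprodSetoid_ev h₁).mono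
      fun i e₁ e₂ => show f i * g i = f' i * g' i by rw [e₁, e₂]))
  one := UProd.mk 𝒰 G fun _ => 1
  inv := Quotient.map (fun f i => (f i)⁻¹)
    (fun f f' h => (uprodSetoid_ev h).mono fun i e => show (f i)⁻¹ = (f' i)⁻¹ by rw [e])
  mul_assoc := by
    rintro ⟨f⟩ ⟨g⟩ ⟨h⟩
    exact Quotient.sound (Filter.Eventually.of_forall fun i => mul_assoc _ _ _)
  one_mul := by
    rintro ⟨f⟩
    exact Quotient.sound (Filter.Eventually.of_forall fun i => one_mul _)
  mul_one := by
    rintro ⟨f⟩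
    exact Quotient.sound (Filter.Eventually.of_forall fun i => mul_one _)
  inv_mul_cancel := by
    rintro ⟨f⟩
    exact Quotient.sound (Filter.Eventually.of_forall fun i => inv_mul_cancel _)

/-- A group `G` is approximable by a class `C` of groups if for every finite subset `F` of
`G` there is a member `H` of `C` and a map `ξ : G → H`, injective on `F`, preserving all
products which stay inside `F`. -/
def Approximable (G : Type*) [Group G] (C : GrpCat.{u} → Prop) : Prop :=
  ∀ F : Finset G, ∃ H : GrpCat.{u}, C H ∧ ∃ ξ : G → ↥H,
    Set.InjOn ξ (F : Set G) ∧
      ∀ g ∈ F, ∀ h ∈ F, g * h ∈ F → ξ (g * h) = ξ g * ξ h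

universe u

/-!
Approximations of `G` on its finite subsets, indexed by `Finset G`, assemble into an injective
homomorphism into the ultraproduct along any ultrafilter containing every cone `{F | S ⊆ F}`.
Universal sentences true in the factors hold in the ultraproduct by Łoś's theorem, and pass down
to `G` along the embedding. Conversely, if `g` enumerates a finite subset of `G`, then "no tuple
has the multiplication table of `g`" is a universal sentence false in `G`; it therefore fails in
some member of `C`, and a tuple witnessing that is an approximation on the subset. Approximating
on a finite set `F` only involves the subgroup generated by `F`, which gives (4).
-/

open FirstOrder Language Structure Filter

section GroupLang

variable {G N : Type*} [Group G] [Group N]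

def MonoidHom.toGroupLangEmbedding (f : G →* N) (hf : Function.Injective f) :
    G ↪[GroupLang] N where
  toFun := f
  inj' := hf
  map_fun' := fun {n} F x =>
    match n, F with
    | 0, _ => map_one f
    | 1, _ => map_inv f (x 0)
    | 2, _ => map_mul f (x 0) (x 1)
  map_rel' r := r.elim

def GroupLang.mulSymbol : GroupLang.Functions 2 := ()

@[simp]
theorem GroupLang.funMap_mulSymbol (a b : G) : funMap GroupLang.mulSymbol ![a, b] = a * b :=
  rfl

end GroupLang

namespace FirstOrder.Language.BoundedFormula

variable {L : Language} {α β : Type*} {n : ℕ}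

theorem IsQF.iInf [Finite β] {f : β → L.BoundedFormula α n} (h : ∀ b, (f b).IsQF) :
    (iInf f).IsQF := by
  let _ := Fintype.ofFinite β
  suffices ∀ l : List β, ((l.map f).foldr (· ⊓ ·) ⊤).IsQF from this _
  intro l
  induction l with
  | nil => exact IsQF.top
  | cons b l ih => exact (h b).inf ih

theorem IsUniversal.alls {φ : L.BoundedFormula α n} (h : φ.IsUniversal) : φ.alls.IsUniversal := by
  induction n with
  | zero => exact h
  | succ n ih => exact ih h.all

theorem IsQF.isUniversal_iAlls [Finite β] {φ : L.Formula (α ⊕ β)} (h : φ.IsQF) :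
    (φ.iAlls β).IsUniversal :=
  (h.relabel _).isUniversal.alls

end FirstOrder.Language.BoundedFormula

namespace UProd

variable {ι : Type*} {𝒰 : Ultrafilter ι} {M : ι → Type*}

theorem mk_eq_mk_iff {f g : ∀ i, M i} :
    UProd.mk 𝒰 M f = UProd.mk 𝒰 M g ↔ ∀ᶠ i in (𝒰 : Filter ι), f i = g i :=
  Quotient.eq

variable (𝒰 M) [∀ i, Group (M i)]

/-- Identifies `UProd` with `Filter.Product`, for which Łoś's theorem is available. -/
def toProduct : UProd 𝒰 M ↪[GroupLang] (𝒰 : Filter ι).Product M where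
  toFun := Quotient.map' id fun _ _ => id
  inj' := by
    rintro ⟨a⟩ ⟨b⟩ h
    exact Quotient.sound (Quotient.exact h)
  map_fun' {n} F x := by
    obtain ⟨y, rfl⟩ : ∃ y : Fin n → ∀ i, M i, (fun j => UProd.mk 𝒰 M (y j)) = x :=
      ⟨fun j => (x j).out, funext fun j => Quotient.out_eq _⟩
    refine Eq.trans ?_ (Ultraproduct.funMap_cast F y).symm
    match n, F with
    | 0, _ => rfl
    | 1, _ => rfl
    | 2, _ => rfl
  map_rel' r := r.elim

variable {𝒰 M}

theorem mk_mul_mk (f g : ∀ i, M i) :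
    UProd.mk 𝒰 M f * UProd.mk 𝒰 M g = UProd.mk 𝒰 M fun i => f i * g i := rfl

theorem realize_of_injective_hom {G : Type*} [Group G] (f : G →* UProd 𝒰 M)
    (hf : Function.Injective f) {φ : GroupLang.Sentence} (hφ : φ.IsUniversal)
    (hM : ∀ᶠ i in (𝒰 : Filter ι), M i ⊨ φ) : G ⊨ φ := by
  have hprod : (𝒰 : Filter ι).Product M ⊨ φ := (Ultraproduct.sentence_realize φ).2 hM
  refine hφ.realize_embedding (v := default) (xs := default)
    ((toProduct 𝒰 M).comp (f.toGroupLangEmbedding hf)) ?_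
  rwa [Unique.eq_default (_ ∘ default), Unique.eq_default (_ ∘ (default : Fin 0 → G))]

end UProd

theorem Approximable.exists_injective_hom_uprod {G : Type u} [Group G] {C : GrpCat.{u} → Prop}
    (h : Approximable G C) :
    ∃ (I : Type u) (𝒰 : Ultrafilter I) (H : I → GrpCat.{u}),
      (∀ i, C (H i)) ∧ ∃ f : G →* UProd 𝒰 fun i => ↥(H i), Function.Injective f := by
  classical
  choose H hCH ξ hinj hmul using h
  let 𝒰 : Ultrafilter (Finset G) := Ultrafilter.of atTop
  have eventually_superset (S : Finset G) : ∀ᶠ F in (𝒰 : Filter (Finset G)), S ⊆ F :=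
    Ultrafilter.of_le atTop (mem_atTop S)
  refine ⟨Finset G, 𝒰, H, hCH, MonoidHom.mk' (fun g => UProd.mk 𝒰 _ fun F => ξ F g) ?_, ?_⟩
  · intro a b
    rw [UProd.mk_mul_mk, UProd.mk_eq_mk_iff]
    filter_upwards [eventually_superset {a, b, a * b}] with F hF
    exact hmul F a (hF (by simp)) b (hF (by simp)) (hF (by simp))
  · intro a b hab
    obtain ⟨F, hξ, hF⟩ := ((UProd.mk_eq_mk_iff.1 hab).and (eventually_superset {a, b})).exists
    exact hinj F (hF (by simp)) (hF (by simp)) hξ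

section MulTable

variable {ι G H : Type*}

def ReproducesMulTable [Mul G] [Mul H] (g : ι → G) (x : ι → H) : Prop :=
  (∀ i j, g i ≠ g j → x i ≠ x j) ∧ ∀ i j k, g i * g j = g k → x i * x j = x k

variable [Finite ι] [Group G] [Group H]

noncomputable def mulTableFormula (g : ι → G) : GroupLang.Formula (Empty ⊕ ι) :=
  let x (i : ι) : GroupLang.Term (Empty ⊕ ι) := Term.var (Sum.inr i)
  (Formula.iInf fun p : {p : ι × ι // g p.1 ≠ g p.2} => ((x p.1.1).equal (x p.1.2)).not) ⊓
    Formula.iInf fun p : {p : ι × ι × ι // g p.1 * g p.2.1 = g p.2.2} =>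
      (Functions.apply₂ GroupLang.mulSymbol (x p.1.1) (x p.1.2.1)).equal (x p.1.2.2)

theorem isQF_mulTableFormula (g : ι → G) : (mulTableFormula g).IsQF :=
  (BoundedFormula.IsQF.iInf fun _ => (BoundedFormula.IsAtomic.equal _ _).isQF.not).inf
    (BoundedFormula.IsQF.iInf fun _ => (BoundedFormula.IsAtomic.equal _ _).isQF)

theorem realize_mulTableFormula (g : ι → G) (v : Empty ⊕ ι → H) :
    (mulTableFormula g).Realize v ↔ ReproducesMulTable g (v ∘ Sum.inr) := by
  simp [mulTableFormula, ReproducesMulTable]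

end MulTable

section Approximable

variable {G : Type*} [Group G] {C : GrpCat.{u} → Prop}

theorem exists_reproducesMulTable_of_universal
    (hG : ∀ φ : GroupLang.Sentence, φ.IsUniversal → (∀ H : GrpCat.{u}, C H → ↥H ⊨ φ) → G ⊨ φ)
    {ι : Type*} [Finite ι] (g : ι → G) :
    ∃ H : GrpCat.{u}, C H ∧ ∃ x : ι → H, ReproducesMulTable g x := by
  by_contra! hC
  have hψ : G ⊨ (mulTableFormula g).not.iAlls ι := by
    refine hG _ (isQF_mulTableFormula g).not.isUniversal_iAlls fun H hH => ?_
    simpa [Sentence.Realize, realize_mulTableFormula] using hC H hH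
  simp only [Sentence.Realize, Formula.realize_iAlls, Formula.realize_not,
    realize_mulTableFormula] at hψ
  exact hψ g ⟨fun _ _ => id, fun _ _ _ => id⟩

def ApproximableOn (C : GrpCat.{u} → Prop) (F : Finset G) : Prop :=
  ∃ H : GrpCat.{u}, C H ∧ ∃ ξ : G → ↥H,
    Set.InjOn ξ (F : Set G) ∧ ∀ g ∈ F, ∀ h ∈ F, g * h ∈ F → ξ (g * h) = ξ g * ξ h

theorem ReproducesMulTable.approximableOn {F : Finset G} {H : GrpCat.{u}} (hH : C H)
    {x : F → H} (hx : ReproducesMulTable (Subtype.val : F → G) x) : ApproximableOn C F := by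
  have hξ (a : F) : Function.extend Subtype.val x 1 a.1 = x a :=
    Subtype.val_injective.extend_apply _ _ a
  refine ⟨H, hH, Function.extend Subtype.val x 1, fun a ha b hb hab => ?_,
    fun a ha b hb hab => ?_⟩
  · by_contra hne
    exact hx.1 ⟨a, ha⟩ ⟨b, hb⟩ hne (by rwa [← hξ, ← hξ])
  · rw [hξ ⟨a * b, hab⟩, hξ ⟨a, ha⟩, hξ ⟨b, hb⟩]
    exact (hx.2 ⟨a, ha⟩ ⟨b, hb⟩ ⟨a * b, hab⟩ rfl).symm

theorem approximable_of_universal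
    (hG : ∀ φ : GroupLang.Sentence, φ.IsUniversal → (∀ H : GrpCat.{u}, C H → ↥H ⊨ φ) → G ⊨ φ) :
    Approximable G C := fun F =>
  have ⟨_, hH, _, hx⟩ := exists_reproducesMulTable_of_universal hG (Subtype.val : F → G)
  hx.approximableOn hH

theorem approximableOn_image_iff [DecidableEq G] {L : Type*} [Group L] {f : L →* G}
    (hf : Function.Injective f) (F : Finset L) :
    ApproximableOn C (F.image f) ↔ ApproximableOn C F := by
  constructor
  · rintro ⟨H, hH, ξ, hinj, hmul⟩
    refine ⟨H, hH, ξ ∘ f, fun a ha b hb hab => hf ?_, fun a ha b hb hab => ?_⟩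
    · exact hinj (Finset.mem_image_of_mem f ha) (Finset.mem_image_of_mem f hb) hab
    · simp only [Function.comp_apply, map_mul]
      refine hmul _ (Finset.mem_image_of_mem f ha) _ (Finset.mem_image_of_mem f hb) ?_
      simpa only [← map_mul] using Finset.mem_image_of_mem f hab
  · rintro ⟨H, hH, ξ, hinj, hmul⟩
    have hξ (a : L) : Function.extend f ξ 1 (f a) = ξ a := hf.extend_apply _ _ a
    refine ⟨H, hH, Function.extend f ξ 1, ?_, ?_⟩
    · rintro _ ha' _ hb' hab
      obtain ⟨a, ha, rfl⟩ := Finset.mem_image.1 ha'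
      obtain ⟨b, hb, rfl⟩ := Finset.mem_image.1 hb'
      rw [hξ, hξ] at hab
      rw [hinj ha hb hab]
    · rintro _ ha' _ hb' hab
      obtain ⟨a, ha, rfl⟩ := Finset.mem_image.1 ha'
      obtain ⟨b, hb, rfl⟩ := Finset.mem_image.1 hb'
      rw [← map_mul, hf.mem_finset_image] at hab
      rw [← map_mul, hξ, hξ, hξ, hmul a ha b hb hab]

theorem Approximable.of_injective (h : Approximable G C) {L : Type*} [Group L] {f : L →* G}
    (hf : Function.Injective f) : Approximable L C := by
  classical
  exact fun F => (approximableOn_image_iff hf F).1 (h _)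

theorem approximable_of_forall_fg (h : ∀ L : Subgroup G, L.FG → Approximable L C) :
    Approximable G C := by
  classical
  intro F
  let L := Subgroup.closure (F : Set G)
  have hF : (F.subtype (· ∈ L)).image L.subtype = F := by
    ext a
    simpa using fun ha : a ∈ F => (Subgroup.subset_closure ha : a ∈ L)
  rw [← hF]
  exact (approximableOn_image_iff L.subtype_injective _).2 (h L ⟨F, rfl⟩ _)

end Approximable

/-- For a group `G` and a class `C` of groups the following are equivalent: (1) `G` is
approximable by `C`; (2) `G` embeds into an ultraproduct of members of `C`; (3) `G`
satisfies every universal sentence true in all members of `C`; (4) every finitely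
generated subgroup of `G` is approximable by `C`. -/
theorem approximable_tfae (G : Type u) [Group G] (C : GrpCat.{u} → Prop) :
    List.TFAE
      [Approximable G C,
       ∃ (I : Type u) (𝒰 : Ultrafilter I) (H : I → GrpCat.{u}),
         (∀ i, C (H i)) ∧
           ∃ f : G →* UProd 𝒰 fun i => ↥(H i), Function.Injective f,
       ∀ φ : GroupLang.Sentence, φ.IsUniversal →
         (∀ H : GrpCat.{u}, C H → ↥H ⊨ φ) → G ⊨ φ,
       ∀ L : Subgroup G, L.FG → Approximable ↥L C] := by
  tfae_have 1 → 2 := Approximable.exists_injective_hom_uprod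
  tfae_have 2 → 3
  | ⟨_, _, H, hC, f, hf⟩, φ, hφ, hCφ =>
    UProd.realize_of_injective_hom f hf hφ (.of_forall fun i => hCφ (H i) (hC i))
  tfae_have 3 → 1 := approximable_of_universal
  tfae_have 1 → 4 := fun h L _ => h.of_injective L.subtype_injective
  tfae_have 4 → 1 := approximable_of_forall_fg
  tfae_finish
end

section
/- A finitely generated group G is LEF if and only if G is a direct limit of residually finite groups, i.e. there exist a sequence (L_n) of residually finite groups and homomorphisms φ_n : L_n → L_{n+1} such that G is isomorphic to the direct limit of this system. -/
open FirstOrder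

/-- A group is residually finite if every nontrivial element has nontrivial image under
some homomorphism to a finite group. -/
def ResiduallyFinite (G : Type*) [Group G] : Prop :=
  ∀ g : G, g ≠ 1 → ∃ (F : GrpCat.{0}) (φ : G →* ↥F), Finite ↥F ∧ φ g ≠ 1

universe u

/-- A group is LEF if it is approximable by the class of finite groups. -/
def LEF (G : Type*) [Group G] : Prop :=
  Approximable G (fun H : GrpCat.{u} => Finite ↥H)

/-- `G` is (isomorphic to) the direct limit of the directed system of groups `L` with
transition maps `f`, via the compatible cocone maps `ψ`. -/
def IsDirectLimit (G : Type*) [Group G] (L : ℕ → GrpCat.{u})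
    (f : ∀ n m : ℕ, n ≤ m → (↥(L n) →* ↥(L m))) (ψ : ∀ n : ℕ, ↥(L n) →* G) : Prop :=
  (∀ (n : ℕ) (x : ↥(L n)), f n n le_rfl x = x) ∧
  (∀ (n m k : ℕ) (hnm : n ≤ m) (hmk : m ≤ k) (x : ↥(L n)),
    f m k hmk (f n m hnm x) = f n k (hnm.trans hmk) x) ∧
  (∀ (n m : ℕ) (h : n ≤ m) (x : ↥(L n)), ψ m (f n m h x) = ψ n x) ∧
  (∀ g : G, ∃ (n : ℕ) (x : ↥(L n)), ψ n x = g) ∧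
  (∀ (n : ℕ) (x : ↥(L n)), ψ n x = 1 → ∃ (m : ℕ) (h : n ≤ m), f n m h x = 1)

/-!
Present `G` as a quotient `π : F(S) → G` of a free group of finite rank. An LEF approximation
`ξₖ` of the word ball of radius `k` extends to a homomorphism `θₖ : F(S) → Hₖ` agreeing with
`ξₖ ∘ π` on words of length `≤ k`, so such a word dies under `θₖ` iff it is a relator. Hence the
normal subgroups `Mₙ = ⋂_{k ≥ n} ker θₖ` increase to `ker π`, and `F(S)/Mₙ`, which embeds in
`∏_{k ≥ n} Hₖ`, is residually finite with direct limit `G`.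

Conversely, a finite `F ⊆ G` lifts to some stage `Lₙ` by a map that is multiplicative on `F`,
since only finitely many relations have to be killed; a finite quotient of `Lₙ` separating the
lifted points then approximates `F`.
-/

universe v w

open Function Set Filter Pointwise

section IsMulOn

variable {G H K : Type*} [Group G] [Group H] [Group K]

def IsMulOn (ξ : G → H) (s : Set G) : Prop :=
  ∀ g ∈ s, ∀ h ∈ s, g * h ∈ s → ξ (g * h) = ξ g * ξ h

namespace IsMulOn

variable {ξ : G → H} {s : Set G}

theorem map_one (hξ : IsMulOn ξ s) (h1 : (1 : G) ∈ s) : ξ 1 = 1 := by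
  have h := hξ 1 h1 1 h1 (by rwa [one_mul])
  rw [one_mul] at h
  exact left_eq_mul.mp h

theorem map_inv (hξ : IsMulOn ξ s) (h1 : (1 : G) ∈ s) {g : G} (hg : g ∈ s) (hg' : g⁻¹ ∈ s) :
    ξ g⁻¹ = (ξ g)⁻¹ :=
  eq_inv_of_mul_eq_one_right <| by
    rw [← hξ g hg _ hg' (by simpa using h1), mul_inv_cancel, hξ.map_one h1]

theorem comp (hξ : IsMulOn ξ s) (φ : H →* K) : IsMulOn (φ ∘ ξ) s :=
  fun g hg h hh hgh => by simp [hξ g hg h hh hgh]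

end IsMulOn

end IsMulOn

theorem LEF.exists_injOn_isMulOn {G : Type*} [Group G] (hG : LEF.{v} G) {s : Set G}
    (hs : s.Finite) : ∃ (H : GrpCat.{v}) (ξ : G → H), Finite H ∧ InjOn ξ s ∧ IsMulOn ξ s := by
  obtain ⟨H, hH, ξ, hinj, hmul⟩ := hG hs.toFinset
  rw [hs.coe_toFinset] at hinj
  exact ⟨H, ξ, hH, hinj, by simpa [IsMulOn] using hmul⟩

theorem LEF.of_forall_finset {G : Type*} [Group G]
    (h : ∀ F : Finset G, ∃ (H : GrpCat.{w}) (ξ : G → H), Finite H ∧ InjOn ξ F ∧ IsMulOn ξ F) :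
    LEF.{v} G := by
  intro F
  obtain ⟨H, ξ, hH, hinj, hmul⟩ := h F
  let e : H ≃* Shrink.{v} H := Shrink.mulEquiv.symm
  exact ⟨GrpCat.of (Shrink.{v} H), Finite.of_equiv H e.toEquiv, e ∘ ξ,
    e.injective.comp_injOn hinj, hmul.comp e.toMonoidHom⟩

namespace ResiduallyFinite

variable {K : Type u} [Group K]

theorem exists_map_ne_one_on_finset (hK : ResiduallyFinite K) (Z : Finset K) :
    ∃ (Q : GrpCat.{u}) (φ : K →* Q), Finite Q ∧ ∀ z ∈ Z, z ≠ 1 → φ z ≠ 1 := by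
  have hsep : ∀ z : K, ∃ (A : GrpCat.{0}) (φ : K →* A), Finite A ∧ (z ≠ 1 → φ z ≠ 1) := by
    intro z
    by_cases hz : z = 1
    · exact ⟨GrpCat.of PUnit, 1, inferInstance, (absurd hz ·)⟩
    · obtain ⟨A, φ, hA, hφ⟩ := hK z hz
      exact ⟨A, φ, hA, fun _ => hφ⟩
  choose A φ hA hφ using hsep
  exact ⟨GrpCat.of (∀ z : Z, A z), MonoidHom.pi fun z => φ z, @Pi.finite _ _ _ fun z => hA z,
    fun z hz hz1 h => hφ z hz1 (congrFun h ⟨z, hz⟩)⟩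

theorem exists_injOn (hK : ResiduallyFinite K) (T : Finset K) :
    ∃ (Q : GrpCat.{u}) (φ : K →* Q), Finite Q ∧ InjOn φ T := by
  classical
  obtain ⟨Q, φ, hQ, hφ⟩ := hK.exists_map_ne_one_on_finset (T⁻¹ * T)
  refine ⟨Q, φ, hQ, fun a ha b hb hab => ?_⟩
  by_contra hne
  refine hφ (a⁻¹ * b) (Finset.mul_mem_mul (Finset.inv_mem_inv ha) hb)
    (by rwa [Ne, inv_mul_eq_one]) ?_
  rw [map_mul, map_inv, hab, inv_mul_cancel]

end ResiduallyFinite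

namespace IsDirectLimit

variable {G : Type u} [Group G] {L : ℕ → GrpCat.{u}} {f : ∀ n m : ℕ, n ≤ m → (L n →* L m)}
  {ψ : ∀ n : ℕ, L n →* G}

theorem eventually_exists_preimage (hlim : IsDirectLimit G L f ψ) (g : G) :
    ∀ᶠ m in atTop, ∃ x : L m, ψ m x = g := by
  obtain ⟨n, x, hx⟩ := hlim.2.2.2.1 g
  filter_upwards [eventually_ge_atTop n] with m hm
  exact ⟨f n m hm x, (hlim.2.2.1 n m hm x).trans hx⟩

theorem eventually_map_eq_one (hlim : IsDirectLimit G L f ψ) {n : ℕ} {x : L n}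
    (hx : ψ n x = 1) : ∀ᶠ m in atTop, ∀ h : n ≤ m, f n m h x = 1 := by
  obtain ⟨k, hnk, hk⟩ := hlim.2.2.2.2 n x hx
  filter_upwards [eventually_ge_atTop k] with m hkm hnm
  rw [← hlim.2.1 n k m hnk hkm, hk, map_one]

theorem exists_section_isMulOn (hlim : IsDirectLimit G L f ψ) (F : Finset G) :
    ∃ (m : ℕ) (y : G → L m), (∀ g ∈ F, ψ m (y g) = g) ∧ IsMulOn y F := by
  obtain ⟨n, hn⟩ :=
    ((eventually_all_finset F).2 fun g _ => hlim.eventually_exists_preimage g).exists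
  set y := invFun (ψ n)
  have hy : ∀ g ∈ F, ψ n (y g) = g := fun g hg => invFun_eq (hn g hg)
  have hrel : ∀ᶠ m in atTop, ∀ g ∈ F, ∀ h ∈ F, g * h ∈ F →
      ∀ hnm : n ≤ m, f n m hnm ((y (g * h))⁻¹ * (y g * y h)) = 1 := by
    simp only [eventually_all_finset, eventually_imp_distrib_left]
    intro g hg h hh hgh
    exact hlim.eventually_map_eq_one (by simp [hy, hg, hh, hgh])
  obtain ⟨m, hrel, hnm⟩ := (hrel.and (eventually_ge_atTop n)).exists
  refine ⟨m, f n m hnm ∘ y, fun g hg => (hlim.2.2.1 n m hnm _).trans (hy g hg),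
    fun g hg h hh hgh => ?_⟩
  have := hrel g hg h hh hgh hnm
  rwa [map_mul, map_inv, inv_mul_eq_one, map_mul] at this

theorem lef (hlim : IsDirectLimit G L f ψ) (hRF : ∀ n, ResiduallyFinite (L n)) : LEF.{v} G := by
  classical
  refine LEF.of_forall_finset fun F => ?_
  obtain ⟨n, y, hψy, hy⟩ := hlim.exists_section_isMulOn F
  obtain ⟨Q, φ, hQ, hφ⟩ := (hRF n).exists_injOn (F.image y)
  refine ⟨Q, φ ∘ y, hQ, fun g hg h hh hgh => ?_, hy.comp φ⟩
  rw [← hψy g hg, ← hψy h hh, hφ (Finset.mem_image_of_mem y hg) (Finset.mem_image_of_mem y hh) hgh]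

end IsDirectLimit

theorem isDirectLimit_quotient {G Γ : Type u} [Group G] [Group Γ] {π : Γ →* G}
    (hπ : Surjective π) {M : ℕ → Subgroup Γ} [∀ n, (M n).Normal] (hM : Monotone M)
    (hMπ : ∀ n, M n ≤ π.ker) (hker : ∀ w, π w = 1 → ∃ n, w ∈ M n) :
    IsDirectLimit G (fun n => GrpCat.of (Γ ⧸ M n))
      (fun _ _ h => QuotientGroup.map _ _ (.id Γ) (hM h))
      (fun n => QuotientGroup.lift _ π (hMπ n)) := by
  refine ⟨fun _ x => QuotientGroup.induction_on x fun _ => rfl,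
    fun _ _ _ _ _ x => QuotientGroup.induction_on x fun _ => rfl,
    fun _ _ _ x => QuotientGroup.induction_on x fun _ => rfl, fun g => ?_, fun n x hx => ?_⟩
  · obtain ⟨w, rfl⟩ := hπ g
    exact ⟨0, w, rfl⟩
  · induction x using QuotientGroup.induction_on with | H w => ?_
    obtain ⟨k, hk⟩ := hker w hx
    exact ⟨max n k, le_max_left n k, (QuotientGroup.eq_one_iff w).2 (hM (le_max_right n k) hk)⟩

theorem residuallyFinite_quotient_ker_pi {Γ ι : Type*} [Group Γ] {H : ι → Type*}
    [∀ i, Group (H i)] [∀ i, Finite (H i)] (θ : ∀ i, Γ →* H i) :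
    ResiduallyFinite (Γ ⧸ (MonoidHom.pi θ).ker) := by
  intro x hx
  induction x using QuotientGroup.induction_on with | H w => ?_
  obtain ⟨i, hi⟩ : ∃ i, θ i w ≠ 1 := by
    by_contra! h
    exact hx ((QuotientGroup.eq_one_iff w).2 (funext h))
  have hker : (MonoidHom.pi θ).ker ≤ (θ i).ker := fun v hv => congrFun hv i
  let e : H i ≃* Shrink.{0} (H i) := Shrink.mulEquiv.symm
  refine ⟨GrpCat.of (Shrink.{0} (H i)), e.toMonoidHom.comp (QuotientGroup.lift _ (θ i) hker),
    Finite.of_equiv _ e.toEquiv, ?_⟩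
  simpa [QuotientGroup.lift_mk] using hi

section WordBall

open FreeGroup (of mk lift norm)

variable {α G H : Type*} [DecidableEq α] [Group G] [Group H] (π : FreeGroup α →* G)

def wordBall (k : ℕ) : Set G := π '' {x | norm x ≤ k}

theorem one_mem_wordBall (k : ℕ) : (1 : G) ∈ wordBall π k :=
  ⟨1, by simp, map_one π⟩

theorem finite_wordBall [Finite α] (k : ℕ) : (wordBall π k).Finite :=
  (((List.finite_length_le _ k).image mk).subset
    fun x hx => ⟨x.toWord, hx, FreeGroup.mk_toWord⟩).image π

variable {π}

theorem lift_eq_of_isMulOn {ξ : G → H} {k : ℕ} (hξ : IsMulOn ξ (wordBall π k))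
    {x : FreeGroup α} (hx : norm x ≤ k) : lift (fun a => ξ (π (of a))) x = ξ (π x) := by
  suffices ∀ l : List (α × Bool), l.length ≤ k → lift (fun a => ξ (π (of a))) (mk l) = ξ (π (mk l))
    by simpa only [FreeGroup.mk_toWord] using this x.toWord hx
  have hmem : ∀ l : List (α × Bool), l.length ≤ k → π (mk l) ∈ wordBall π k :=
    fun l hl => ⟨mk l, FreeGroup.norm_mk_le.trans hl, rfl⟩
  have h1 := one_mem_wordBall π k
  intro l hl
  induction l with
  | nil => exact (map_one _).trans ((congrArg ξ (map_one π)).trans (hξ.map_one h1)).symm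
  | cons a l ih =>
    have hl' : l.length ≤ k := (Nat.le_succ _).trans hl
    have ha : [a].length ≤ k := le_trans (by simp) hl
    have hletter : lift (fun a => ξ (π (of a))) (mk [a]) = ξ (π (mk [a])) := by
      obtain ⟨s, _ | _⟩ := a
      · have hinv : mk [(s, false)] = (of s)⁻¹ := by rw [of, FreeGroup.inv_mk]; rfl
        have hs : π (of s) ∈ wordBall π k := ⟨of s, (FreeGroup.norm_of s).trans_le ha, rfl⟩
        have hs' : (π (of s))⁻¹ ∈ wordBall π k := by rw [← map_inv, ← hinv]; exact hmem _ ha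
        rw [hinv, map_inv, map_inv, FreeGroup.lift_apply_of, hξ.map_inv h1 hs hs']
      · exact FreeGroup.lift_apply_of
    rw [← List.singleton_append, ← FreeGroup.mul_mk, map_mul, map_mul, hletter, ih hl',
      hξ _ (hmem _ ha) _ (hmem _ hl') (by rw [← map_mul, FreeGroup.mul_mk]; exact hmem _ hl)]

end WordBall

open FreeGroup (of lift norm) in
theorem LEF.exists_isDirectLimit_residuallyFinite {G α : Type u} [Group G] [Finite α]
    {π : FreeGroup α →* G} (hπ : Surjective π) (hG : LEF.{v} G) :
    ∃ (L : ℕ → GrpCat.{u}) (f : ∀ n m : ℕ, n ≤ m → (L n →* L m)) (ψ : ∀ n : ℕ, L n →* G),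
      (∀ n, ResiduallyFinite (L n)) ∧ IsDirectLimit G L f ψ := by
  classical
  choose H ξ hH hξinj hξ using fun k => hG.exists_injOn_isMulOn (finite_wordBall π k)
  let θ (k : ℕ) : FreeGroup α →* H k := lift fun a => ξ k (π (of a))
  have hθ (k : ℕ) (x : FreeGroup α) (hx : norm x ≤ k) : θ k x = 1 ↔ π x = 1 := by
    have h1 := one_mem_wordBall π k
    rw [lift_eq_of_isMulOn (hξ k) hx, ← (hξ k).map_one h1]
    exact (hξinj k).eq_iff ⟨x, hx, rfl⟩ h1
  let M (n : ℕ) := (MonoidHom.pi fun k : {k // n ≤ k} => θ k).ker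
  have hmemM (n : ℕ) (w : FreeGroup α) : w ∈ M n ↔ ∀ k, n ≤ k → θ k w = 1 := by
    simp [M, MonoidHom.mem_ker, funext_iff]
  refine ⟨_, _, _, fun n => residuallyFinite_quotient_ker_pi _, isDirectLimit_quotient hπ (M := M)
    (fun n m hnm w hw => ?_) (fun n w hw => ?_) (fun w hw => ⟨norm w, ?_⟩)⟩
  · rw [hmemM] at hw ⊢
    exact fun k hk => hw k (hnm.trans hk)
  · exact (hθ _ w (le_max_right n (norm w))).1 ((hmemM n w).1 hw _ (le_max_left n (norm w)))
  · exact (hmemM _ w).2 fun k hk => (hθ k w hk).2 hw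

/-- A finitely generated group is LEF if and only if it is a direct limit of residually
finite groups. -/
theorem lef_iff_direct_limit_of_residually_finite (G : Type u) [Group G]
    (hfg : Group.FG G) :
    LEF G ↔
      ∃ (L : ℕ → GrpCat.{u}) (f : ∀ n m : ℕ, n ≤ m → (↥(L n) →* ↥(L m)))
        (ψ : ∀ n : ℕ, ↥(L n) →* G),
        (∀ n, ResiduallyFinite ↥(L n)) ∧ IsDirectLimit G L f ψ := by
  refine ⟨fun hG => ?_, fun ⟨L, f, ψ, hRF, hlim⟩ => hlim.lef hRF⟩
  obtain ⟨S, hS, π, hπ⟩ := Group.fg_iff_exists_freeGroup_hom_surjective.mp hfg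
  have := hS.to_subtype
  exact hG.exists_isDirectLimit_residuallyFinite hπ
end

section
/- Every pseudofinite CSA-group is abelian. -/
open FirstOrder

/-- A group is pseudofinite if it satisfies every first-order sentence (in the language of
groups) which is true in all finite groups. -/
def Pseudofinite (G : Type*) [Group G] : Prop :=
  ∀ φ : GroupLang.Sentence, (∀ (F : Type) [Group F] [Finite F], F ⊨ φ) → G ⊨ φ

/-- A subgroup is maximal abelian if it is abelian and is not properly contained in any
abelian subgroup. -/
def IsMaximalAbelian {G : Type*} [Group G] (A : Subgroup G) : Prop :=
  (∀ a ∈ A, ∀ b ∈ A, a * b = b * a) ∧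
    ∀ B : Subgroup G, (∀ a ∈ B, ∀ b ∈ B, a * b = b * a) → A ≤ B → B = A

/-- A group is a CSA-group if every maximal abelian subgroup `A` is malnormal, i.e. for
every `g ∉ A` the intersection `A^g ∩ A` is trivial. -/
def IsCSAGroup (G : Type*) [Group G] : Prop :=
  ∀ A : Subgroup G, IsMaximalAbelian A →
    ∀ g : G, g ∉ A → ∀ x ∈ A, g⁻¹ * x * g ∈ A → x = 1

/-!
In a CSA-group commutation is transitive on nontrivial elements, and a nontrivial element `a`
commuting with a conjugate `g * a * g⁻¹` commutes with `g`. Both properties are first-order,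
so by pseudofiniteness it suffices to show that a finite group `G` with both of them is abelian.
For `x ≠ 1` with `k` conjugates, the punctured centralizers of these conjugates are then
pairwise disjoint, so their union has `k * (|C(x)| - 1) = |G| - k ≥ |G| / 2` elements.
If `a` and `b` do not commute, `a` has `k ≥ 2` conjugates, so some `y ≠ 1` lies outside the
union for `a`; the union for `y` is disjoint from it, and the two unions together exceed the
`|G| - 1` nontrivial elements.
-/

open FirstOrder.Language

def IsCommTransitive (G : Type*) [Group G] : Prop :=
  ∀ a b c : G, a ≠ 1 → Commute a b → Commute a c → Commute b c

-- For a commutative-transitive group this says that centralizers of nontrivial elements are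
-- malnormal.
def IsConjCommuteRigid (G : Type*) [Group G] : Prop :=
  ∀ a g : G, a ≠ 1 → Commute a (g * a * g⁻¹) → Commute a g

lemma IsConjCommuteRigid.eq_of_isConj_of_commute {G : Type*} [Group G]
    (hR : IsConjCommuteRigid G) {a b : G} (ha : a ≠ 1) (hab : IsConj a b) (hc : Commute a b) :
    a = b := by
  obtain ⟨g, rfl⟩ := isConj_iff.1 hab
  exact ((hR a g ha hc).symm.mul_inv_cancel).symm

namespace GroupLang

def oneSymb : GroupLang.Constants := ()

def invSymb : GroupLang.Functions 1 := ()

def mulSymb : GroupLang.Functions 2 := ()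

variable {α β : Type*}

def one : GroupLang.Term β := oneSymb.term

def inv (t : GroupLang.Term β) : GroupLang.Term β := invSymb.apply₁ t

def mul (t s : GroupLang.Term β) : GroupLang.Term β := mulSymb.apply₂ t s

def commute {n : ℕ} (t s : GroupLang.Term (α ⊕ Fin n)) : GroupLang.BoundedFormula α n :=
  mul t s =' mul s t

variable {G : Type*} [Group G]

@[simp] lemma realize_one (v : β → G) : (one : GroupLang.Term β).realize v = 1 := rfl

@[simp] lemma realize_inv (t : GroupLang.Term β) (v : β → G) :
    (inv t).realize v = (t.realize v)⁻¹ := rfl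

@[simp] lemma realize_mul (t s : GroupLang.Term β) (v : β → G) :
    (mul t s).realize v = t.realize v * s.realize v := rfl

@[simp] lemma realize_commute {n : ℕ} (t s : GroupLang.Term (α ⊕ Fin n)) (v : α → G)
    (xs : Fin n → G) :
    (commute t s).Realize v xs ↔
      Commute (t.realize (Sum.elim v xs)) (s.realize (Sum.elim v xs)) :=
  Iff.rfl

def commutativeSentence : GroupLang.Sentence := ∀' ∀' commute &0 &1

def commTransitiveSentence : GroupLang.Sentence :=
  ∀' ∀' ∀' (∼(&0 =' one) ⟹ commute &0 &1 ⟹ commute &0 &2 ⟹ commute &1 &2)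

def conjCommuteRigidSentence : GroupLang.Sentence :=
  ∀' ∀' (∼(&0 =' one) ⟹ commute &0 (mul (mul &1 &0) (inv &1)) ⟹ commute &0 &1)

@[simp] lemma realize_commutativeSentence :
    G ⊨ commutativeSentence ↔ ∀ a b : G, Commute a b := by
  simp [commutativeSentence, Sentence.Realize, Formula.Realize, Fin.snoc]

@[simp] lemma realize_commTransitiveSentence :
    G ⊨ commTransitiveSentence ↔ IsCommTransitive G := by
  simp [commTransitiveSentence, IsCommTransitive, Sentence.Realize, Formula.Realize, Fin.snoc]

@[simp] lemma realize_conjCommuteRigidSentence :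
    G ⊨ conjCommuteRigidSentence ↔ IsConjCommuteRigid G := by
  simp [conjCommuteRigidSentence, IsConjCommuteRigid, Sentence.Realize, Formula.Realize,
    Fin.snoc]

end GroupLang

lemma Pseudofinite.realize_imp {G : Type*} [Group G] (hG : Pseudofinite G)
    {φ ψ : GroupLang.Sentence} (h : ∀ (F : Type) [Group F] [Finite F], F ⊨ φ → F ⊨ ψ) :
    G ⊨ φ → G ⊨ ψ :=
  (Sentence.realize_imp _).1 (hG _ fun F _ _ => (Sentence.realize_imp F).2 (h F))

section CSA

variable {G : Type*} [Group G]

lemma exists_isMaximalAbelian_le {A₀ : Subgroup G}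
    (hA₀ : ∀ a ∈ A₀, ∀ b ∈ A₀, a * b = b * a) :
    ∃ A : Subgroup G, IsMaximalAbelian A ∧ A₀ ≤ A := by
  let abelian : Set (Subgroup G) := {B | ∀ a ∈ B, ∀ b ∈ B, a * b = b * a}
  have chain_bdd : ∀ c ⊆ abelian, IsChain (· ≤ ·) c → ∀ B ∈ c,
      ∃ ub ∈ abelian, ∀ B' ∈ c, B' ≤ ub := by
    intro c hc hchain B hB
    refine ⟨sSup c, fun a ha b hb => ?_, fun B' hB' => le_sSup hB'⟩
    rw [Subgroup.mem_sSup_of_directedOn ⟨B, hB⟩ hchain.directedOn] at ha hb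
    obtain ⟨Ba, hBa, ha⟩ := ha
    obtain ⟨Bb, hBb, hb⟩ := hb
    rcases hchain.total hBa hBb with hle | hle
    · exact hc hBb a (hle ha) b hb
    · exact hc hBa a ha b (hle hb)
  obtain ⟨A, hA₀A, hmax⟩ := zorn_le_nonempty₀ abelian chain_bdd A₀ hA₀
  exact ⟨A, ⟨hmax.1, fun B hB hAB => le_antisymm (hmax.2 hB hAB) hAB⟩, hA₀A⟩

lemma exists_isMaximalAbelian_mem_mem {a b : G} (h : Commute a b) :
    ∃ A : Subgroup G, IsMaximalAbelian A ∧ a ∈ A ∧ b ∈ A := by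
  have hpair : ∀ x ∈ ({a, b} : Set G), ∀ y ∈ ({a, b} : Set G), x * y = y * x := by
    rintro x (rfl | rfl) y (rfl | rfl) <;> first | rfl | exact h | exact h.symm
  obtain ⟨A, hA, hle⟩ := exists_isMaximalAbelian_le fun x hx y hy =>
    Set.centralizer_centralizer_comm_of_comm hpair x
      (Subgroup.closure_le_centralizer_centralizer _ hx) y
      (Subgroup.closure_le_centralizer_centralizer _ hy)
  exact ⟨A, hA, hle (Subgroup.subset_closure (by simp)),
    hle (Subgroup.subset_closure (by simp))⟩

namespace IsCSAGroup

variable (h : IsCSAGroup G)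
include h

lemma isCommTransitive : IsCommTransitive G := by
  intro a b c ha hab hac
  obtain ⟨A, hA, haA, hbA⟩ := exists_isMaximalAbelian_mem_mem hab
  by_cases hcA : c ∈ A
  · exact hA.1 b hbA c hcA
  · refine absurd (h A hA c hcA a haA ?_) ha
    rwa [hac.symm.inv_mul_cancel]

lemma isConjCommuteRigid : IsConjCommuteRigid G := by
  intro a g ha hconj
  obtain ⟨A, hA, haA, hconjA⟩ := exists_isMaximalAbelian_mem_mem hconj
  by_cases hgA : g ∈ A
  · exact hA.1 a haA g hgA
  · refine absurd (h A hA g⁻¹ (inv_mem_iff.not.2 hgA) a haA ?_) ha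
    rwa [inv_inv]

end IsCSAGroup

end CSA

section Finite

open Finset

variable {G : Type*} [Group G] [Fintype G] [DecidableEq G]

def conjugatesFinset (x : G) : Finset G := univ.image fun g => g * x * g⁻¹

def centralizerFinset (x : G) : Finset G := univ.filter fun u => u * x = x * u

lemma mem_conjugatesFinset {x y : G} : y ∈ conjugatesFinset x ↔ IsConj x y := by
  simp [conjugatesFinset, isConj_iff]

lemma mem_centralizerFinset {x u : G} : u ∈ centralizerFinset x ↔ Commute u x := by
  simp [centralizerFinset, Commute, SemiconjBy]

lemma conjugatesFinset_eq_of_mem {x y : G} (hy : y ∈ conjugatesFinset x) :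
    conjugatesFinset y = conjugatesFinset x := by
  ext z
  simp only [mem_conjugatesFinset] at hy ⊢
  exact ⟨hy.trans, hy.symm.trans⟩

lemma card_conjugatesFinset_mul_card_centralizerFinset (x : G) :
    #(conjugatesFinset x) * #(centralizerFinset x) = Fintype.card G := by
  have hconj : (Subgroup.centralizer {x}).index = #(conjugatesFinset x) := by
    rw [(congrArg Subgroup.index (Subgroup.centralizer_eq_comap_stabilizer x)).trans
      (Subgroup.index_comap_of_surjective _ ConjAct.toConjAct.surjective),
      MulAction.index_stabilizer, ← Set.ncard_coe_finset]
    congr 1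
    ext y
    rw [ConjAct.mem_orbit_conjAct, Finset.mem_coe, mem_conjugatesFinset, isConj_comm]
  have hcent : #(centralizerFinset x) = Nat.card (Subgroup.centralizer {x}) := by
    have : (centralizerFinset x : Set G) = Subgroup.centralizer {x} := by
      ext u
      rw [Finset.mem_coe, mem_centralizerFinset, SetLike.mem_coe,
        Subgroup.mem_centralizer_singleton_iff]
      exact Iff.rfl
    rw [← Set.ncard_coe_finset, this]
    exact (Nat.card_coe_set_eq _).symm
  rw [← hconj, hcent, Subgroup.index_mul_card, Nat.card_eq_fintype_card]

lemma card_centralizerFinset_of_mem_conjugatesFinset {x y : G} (hy : y ∈ conjugatesFinset x) :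
    #(centralizerFinset y) = #(centralizerFinset x) := by
  have h := card_conjugatesFinset_mul_card_centralizerFinset y
  rw [conjugatesFinset_eq_of_mem hy, ← card_conjugatesFinset_mul_card_centralizerFinset x] at h
  exact Nat.eq_of_mul_eq_mul_left (card_pos.2 ⟨x, mem_conjugatesFinset.2 (.refl x)⟩) h

lemma two_mul_card_conjugatesFinset_le {x : G} (hx : x ≠ 1) :
    2 * #(conjugatesFinset x) ≤ Fintype.card G := by
  have hpair : {1, x} ⊆ centralizerFinset x := by
    intro u hu
    rcases mem_insert.1 hu with rfl | hu
    · exact mem_centralizerFinset.2 (.one_left x)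
    · exact mem_centralizerFinset.2 (mem_singleton.1 hu ▸ .refl x)
  have h2 : 2 ≤ #(centralizerFinset x) := card_pair hx.symm ▸ card_le_card hpair
  rw [← card_conjugatesFinset_mul_card_centralizerFinset x, mul_comm]
  exact Nat.mul_le_mul_left _ h2

def conjCentralizerUnion (x : G) : Finset G :=
  (conjugatesFinset x).biUnion fun y => (centralizerFinset y).erase 1

lemma mem_conjCentralizerUnion {x u : G} :
    u ∈ conjCentralizerUnion x ↔ u ≠ 1 ∧ ∃ y, IsConj x y ∧ Commute u y := by
  simp only [conjCentralizerUnion, mem_biUnion, mem_erase, mem_conjugatesFinset,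
    mem_centralizerFinset]
  tauto

variable (hCT : IsCommTransitive G)
include hCT

lemma card_conjCentralizerUnion_add_card_conjugatesFinset (hR : IsConjCommuteRigid G) {x : G}
    (hx : x ≠ 1) : #(conjCentralizerUnion x) + #(conjugatesFinset x) = Fintype.card G := by
  have hdisj :
      (conjugatesFinset x : Set G).PairwiseDisjoint fun y => (centralizerFinset y).erase 1 := by
    intro y₁ hy₁ y₂ hy₂ hne
    rw [Function.onFun, disjoint_left]
    intro u hu₁ hu₂
    rw [mem_erase, mem_centralizerFinset] at hu₁ hu₂
    have hxy₁ := mem_conjugatesFinset.1 hy₁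
    have hy₁1 : y₁ ≠ 1 := fun h => hx (isConj_one_left.1 (h ▸ hxy₁))
    exact hne (hR.eq_of_isConj_of_commute hy₁1 (hxy₁.symm.trans (mem_conjugatesFinset.1 hy₂))
      (hCT u y₁ y₂ hu₁.1 hu₁.2 hu₂.2))
  have hcard : ∀ y ∈ conjugatesFinset x,
      #((centralizerFinset y).erase 1) = #(centralizerFinset x) - 1 := by
    intro y hy
    rw [card_erase_of_mem (mem_centralizerFinset.2 (.one_left y)),
      card_centralizerFinset_of_mem_conjugatesFinset hy]
  have hpos : 0 < #(centralizerFinset x) :=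
    card_pos.2 ⟨1, mem_centralizerFinset.2 (.one_left x)⟩
  rw [conjCentralizerUnion, card_biUnion hdisj, sum_congr rfl hcard, sum_const, smul_eq_mul,
    ← card_conjugatesFinset_mul_card_centralizerFinset x, Nat.mul_sub_one,
    Nat.sub_add_cancel (Nat.le_mul_of_pos_right _ hpos)]

lemma disjoint_conjCentralizerUnion {x y : G} (hy1 : y ≠ 1) (hy : y ∉ conjCentralizerUnion x) :
    Disjoint (conjCentralizerUnion x) (conjCentralizerUnion y) := by
  rw [disjoint_left]
  intro u hux huy
  obtain ⟨hu, x', hxx', hux'⟩ := mem_conjCentralizerUnion.1 hux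
  obtain ⟨-, y', hyy', huy'⟩ := mem_conjCentralizerUnion.1 huy
  obtain ⟨g, rfl⟩ := isConj_iff.1 hyy'
  refine hy (mem_conjCentralizerUnion.2 ⟨hy1, g⁻¹ * x' * g, ?_, ?_⟩)
  · exact hxx'.trans (isConj_iff.2 ⟨g⁻¹, by group⟩)
  · simpa [mul_assoc] using (hCT u _ _ hu huy' hux').map (MulAut.conj g⁻¹)

end Finite

open Finset in
theorem IsCommTransitive.commute_of_isConjCommuteRigid {G : Type*} [Group G] [Finite G]
    (hCT : IsCommTransitive G) (hR : IsConjCommuteRigid G) (a b : G) : Commute a b := by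
  classical
  have := Fintype.ofFinite G
  by_contra hab
  have ha : a ≠ 1 := by rintro rfl; exact hab (.one_left b)
  have ha_noncentral : 1 < #(conjugatesFinset a) :=
    one_lt_card.2 ⟨a, mem_conjugatesFinset.2 (.refl a), b * a * b⁻¹,
      mem_conjugatesFinset.2 (isConj_iff.2 ⟨b, rfl⟩),
      fun h => hab (mul_inv_eq_iff_eq_mul.1 h.symm).symm⟩
  have hTa := card_conjCentralizerUnion_add_card_conjugatesFinset hCT hR ha
  have hsub : ∀ x : G, conjCentralizerUnion x ⊆ univ.erase 1 := fun x u hu =>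
    mem_erase.2 ⟨(mem_conjCentralizerUnion.1 hu).1, mem_univ u⟩
  obtain ⟨y, hy, hyT⟩ := exists_mem_notMem_of_card_lt_card (s := conjCentralizerUnion a)
    (t := univ.erase 1) (by rw [card_erase_of_mem (mem_univ 1), card_univ]; omega)
  have hy1 : y ≠ 1 := ne_of_mem_erase hy
  have hTy := card_conjCentralizerUnion_add_card_conjugatesFinset hCT hR hy1
  have hunion := card_le_card (union_subset (hsub a) (hsub y))
  rw [card_union_of_disjoint (disjoint_conjCentralizerUnion hCT hy1 hyT),
    card_erase_of_mem (mem_univ 1), card_univ] at hunion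
  have := two_mul_card_conjugatesFinset_le ha
  have := two_mul_card_conjugatesFinset_le hy1
  omega

/-- Every pseudofinite CSA-group is abelian. -/
theorem pseudofinite_csa_group_is_abelian (G : Type*) [Group G]
    (hpf : Pseudofinite G) (h : IsCSAGroup G) : ∀ a b : G, a * b = b * a := by
  have hfinite : ∀ (F : Type) [Group F] [Finite F],
      F ⊨ GroupLang.commTransitiveSentence ⊓ GroupLang.conjCommuteRigidSentence →
        F ⊨ GroupLang.commutativeSentence := by
    intro F _ _ hF
    simp only [Sentence.realize_inf, GroupLang.realize_commTransitiveSentence,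
      GroupLang.realize_conjCommuteRigidSentence, GroupLang.realize_commutativeSentence] at hF ⊢
    exact hF.1.commute_of_isConjCommuteRigid hF.2
  have hG := hpf.realize_imp hfinite
  simp only [Sentence.realize_inf, GroupLang.realize_commTransitiveSentence,
    GroupLang.realize_conjCommuteRigidSentence, GroupLang.realize_commutativeSentence] at hG
  exact hG ⟨h.isCommTransitive, h.isConjCommuteRigid⟩
end

section
/- Let G be an ℵ0-saturated group. Then either G contains a free subgroup of rank 2, or G satisfies a nontrivial identity in two variables. In the latter case, either G contains a free subsemigroup of rank 2, or G satisfies a finite disjunction of nontrivial positive identities in two variables, i.e. there are finitely many pairs (t_1, s_1), …, (t_k, s_k) of distinct words in the free semigroup on {x, y} (allowing the empty word) such that for all g, h in G one has t_i(g, h) = s_i(g, h) for some i. -/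
open FirstOrder

/-- A group is ℵ₀-saturated if every countable set of first-order formulas in one free
variable, with finitely many parameters from the group, which is finitely satisfiable in
the group is realized in the group. -/
def AlephZeroSaturated (G : Type*) [Group G] : Prop :=
  ∀ (k : ℕ) (c : Fin k → G) (p : ℕ → GroupLang.Formula (Fin k ⊕ Fin 1)),
    (∀ s : Finset ℕ, ∃ g : G, ∀ n ∈ s, (p n).Realize (Sum.elim c fun _ => g)) →
    ∃ g : G, ∀ n : ℕ, (p n).Realize (Sum.elim c fun _ => g)

/-- A group contains a free subgroup of rank 2 if there is an injective homomorphism from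
the free group on two generators into it. -/
def ContainsFreeGroupRank2 (G : Type*) [Group G] : Prop :=
  ∃ f : FreeGroup Bool →* G, Function.Injective f

/-- Evaluation of a positive word (a list over a two-letter alphabet) at a pair of
group elements. -/
def posWordEval {G : Type*} [Group G] (a b : G) (w : List Bool) : G :=
  (w.map fun x => if x then a else b).prod

/-- A group contains a free subsemigroup of rank 2 if there are two elements at which
distinct nonempty positive words evaluate to distinct elements. -/
def ContainsFreeSubsemigroupRank2 (G : Type*) [Group G] : Prop :=
  ∃ a b : G, ∀ w₁ w₂ : List Bool, w₁ ≠ [] → w₂ ≠ [] → w₁ ≠ w₂ →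
    posWordEval a b w₁ ≠ posWordEval a b w₂

/-- A group satisfies a nontrivial identity (in two variables) if some nontrivial reduced
word in the free group on two generators vanishes identically on the group. -/
def SatisfiesNontrivialIdentity (G : Type*) [Group G] : Prop :=
  ∃ w : FreeGroup Bool, w ≠ 1 ∧
    ∀ a b : G, FreeGroup.lift (fun x => if x then a else b) w = 1

/-!
If `G` satisfies no nontrivial identity, then for every finite set of nontrivial words some pair
`(a, b)` avoids all of them, since a finite disjunction of identities can be merged into a single
one. Saturation then produces one pair `(a, b)` at which no nontrivial word vanishes, i.e. a free
subgroup. The same compactness argument applied to the inequalities `t(a, b) ≠ s(a, b)` between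
distinct nonempty positive words yields the semigroup alternative.

Merging two identities `v`, `u`: conjugating `v` by a letter `z` that occurs in neither word makes
`⁅z v z⁻¹, u⁆` nontrivial, and it vanishes wherever `v` or `u` does. Since `F(ℤ)` embeds in `F₂`
via `n ↦ xⁿ y x⁻ⁿ`, the merged word can be taken in `F₂`, at the price of substituting an
injective endomorphism of `F₂` into the remaining words.
-/

open scoped commutatorElement

namespace FreeGroup

variable {α : Type*}

theorem isReduced_singleton_append_append {z : α} {e : Bool} {B R : List (α × Bool)}
    (hB : IsReduced B) (hB₀ : B ≠ []) (hBz : ∀ c ∈ B, c.1 ≠ z) (hR : IsReduced R)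
    (hRz : ∀ d ∈ R.head?, d.1 = z) : IsReduced ([(z, e)] ++ B ++ R) := by
  rw [List.singleton_append, List.cons_append]
  refine List.isChain_cons.2
    ⟨fun c hc h => ?_, List.isChain_append.2 ⟨hB, hR, fun c hc d hd h => ?_⟩⟩
  · rw [List.head?_append_of_ne_nil _ hB₀] at hc
    exact (hBz c (List.mem_of_mem_head? hc) h.symm).elim
  · exact (hBz c (List.mem_of_mem_getLast? hc) (h.trans (hRz d hd))).elim

variable [DecidableEq α]

theorem fst_ne_of_mem_toWord_inv {z : α} {x : FreeGroup α} (h : ∀ c ∈ x.toWord, c.1 ≠ z) :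
    ∀ c ∈ x⁻¹.toWord, c.1 ≠ z := by
  intro c hc
  rw [toWord_inv, invRev, List.mem_reverse, List.mem_map] at hc
  obtain ⟨d, hd, rfl⟩ := hc
  exact h d hd

theorem fst_ne_of_mem_toWord_map {β : Type*} [DecidableEq β] {f : α → β} {z : β}
    (hf : ∀ a, f a ≠ z) (x : FreeGroup α) : ∀ c ∈ (map f x).toWord, c.1 ≠ z := by
  intro c hc
  rw [← mk_toWord (x := x), map.mk, toWord_mk] at hc
  obtain ⟨d, -, rfl⟩ := List.mem_map.1 (reduce.red.sublist.subset hc)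
  exact hf d.1

theorem commutatorElement_conj_of_ne_one {z : α} {x y : FreeGroup α} (hx : x ≠ 1) (hy : y ≠ 1)
    (hzx : ∀ c ∈ x.toWord, c.1 ≠ z) (hzy : ∀ c ∈ y.toWord, c.1 ≠ z) :
    ⁅of z * x * (of z)⁻¹, y⁆ ≠ 1 := by
  have hL : ⁅of z * x * (of z)⁻¹, y⁆ = mk ([(z, true)] ++ x.toWord ++ ([(z, false)] ++
      y.toWord ++ ([(z, true)] ++ x⁻¹.toWord ++ ([(z, false)] ++ y⁻¹.toWord ++ [])))) := by
    simp only [← mul_mk, mk_toWord, ← one_eq_mk]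
    rw [show mk [(z, true)] = of z from rfl, show mk [(z, false)] = (of z)⁻¹ from rfl]
    simp [commutatorElement_def, mul_assoc]
  have hne {w : FreeGroup α} (hw : w ≠ 1) : w.toWord ≠ [] := mt toWord_eq_nil_iff.1 hw
  have h₄ : IsReduced ([(z, false)] ++ y⁻¹.toWord ++ []) := isReduced_singleton_append_append
    isReduced_toWord (hne (inv_ne_one.2 hy)) (fst_ne_of_mem_toWord_inv hzy) .nil (by simp)
  have h₃ := isReduced_singleton_append_append (e := true) isReduced_toWord
    (hne (inv_ne_one.2 hx)) (fst_ne_of_mem_toWord_inv hzx) h₄ (by simp)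
  have h₂ := isReduced_singleton_append_append (e := false) isReduced_toWord (hne hy) hzy h₃
    (by simp)
  have h₁ := isReduced_singleton_append_append (e := true) isReduced_toWord (hne hx) hzx h₂
    (by simp)
  rw [hL, ne_eq, ← toWord_eq_nil_iff, toWord_mk, h₁.reduce_eq]
  simp

def shiftAut : Multiplicative ℤ →* MulAut (FreeGroup ℤ) where
  toFun n := freeGroupCongr (Equiv.addRight n.toAdd)
  map_one' := by ext; simp
  map_mul' _ _ := by ext; simp [map.comp, Function.comp_def, add_comm, add_left_comm]

def zpowConj : FreeGroup ℤ →* FreeGroup Bool :=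
  lift fun n => of true ^ n * of false * (of true ^ n)⁻¹

theorem zpowConj_injective : Function.Injective zpowConj := by
  -- `F₂ ≅ F(ℤ) ⋊ ℤ`, with `ℤ` shifting the generators; `Θ` sends `xⁿ y x⁻ⁿ` to `of n`.
  let Θ : FreeGroup Bool →* FreeGroup ℤ ⋊[shiftAut] Multiplicative ℤ :=
    lift fun b => if b then SemidirectProduct.inr (.ofAdd 1) else SemidirectProduct.inl (of 0)
  have hΘ : Θ.comp zpowConj = SemidirectProduct.inl := by
    refine ext_hom _ _ fun n => ?_
    simp only [MonoidHom.comp_apply, zpowConj, Θ, lift_apply_of, _root_.map_mul, _root_.map_inv,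
      map_zpow, if_true, Bool.false_eq_true, if_false]
    rw [← map_zpow, ← _root_.map_inv, ← SemidirectProduct.inl_aut]
    simp [shiftAut]
  refine Function.Injective.of_comp (f := Θ) ?_
  rw [← MonoidHom.coe_comp, hΘ]
  exact SemidirectProduct.inl_injective

/-- `x ↦ x y x⁻¹, y ↦ x² y x⁻²`. Its image is `zpowConj` of words in the letters `1, 2`, so
`y = zpowConj (of 0)` behaves as a letter that is fresh for it. -/
def conjEndo : FreeGroup Bool →* FreeGroup Bool :=
  zpowConj.comp (map fun b => if b then 1 else 2)

theorem conjEndo_injective : Function.Injective conjEndo :=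
  zpowConj_injective.comp (map_injective (by decide))

def lawCombine (v u : FreeGroup Bool) : FreeGroup Bool :=
  ⁅of false * conjEndo v * (of false)⁻¹, conjEndo u⁆

theorem lawCombine_ne_one {v u : FreeGroup Bool} (hv : v ≠ 1) (hu : u ≠ 1) :
    lawCombine v u ≠ 1 := by
  have hy : zpowConj (of 0) = of false := by simp [zpowConj]
  have hι : Function.Injective (map fun b : Bool => if b then (1 : ℤ) else 2) :=
    map_injective (by decide)
  have hfresh := fst_ne_of_mem_toWord_map (f := fun b : Bool => if b then (1 : ℤ) else 2)
    (z := 0) (by decide)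
  rw [lawCombine, ← hy, conjEndo, MonoidHom.comp_apply, MonoidHom.comp_apply, ← _root_.map_mul,
    ← _root_.map_inv, ← _root_.map_mul, ← map_commutatorElement,
    map_ne_one_iff _ zpowConj_injective]
  exact commutatorElement_conj_of_ne_one ((map_ne_one_iff _ hι).2 hv) ((map_ne_one_iff _ hι).2 hu)
    (hfresh v) (hfresh u)

variable {G : Type*} [Group G]

theorem map_lawCombine_eq_one (φ : FreeGroup Bool →* G) {v u : FreeGroup Bool}
    (h : φ (conjEndo v) = 1 ∨ φ (conjEndo u) = 1) : φ (lawCombine v u) = 1 := by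
  rcases h with h | h <;> simp [lawCombine, map_commutatorElement, h]

/-- Merge the first two words with `lawCombine`; applying the hypothesis to `φ ∘ conjEndo` shows
that the new list, with `conjEndo` substituted into the remaining words, is still covering. -/
theorem exists_ne_one_forall_map_eq_one :
    ∀ l : List (FreeGroup Bool), (∀ v ∈ l, v ≠ 1) →
      (∀ φ : FreeGroup Bool →* G, ∃ v ∈ l, φ v = 1) →
      ∃ w : FreeGroup Bool, w ≠ 1 ∧ ∀ φ : FreeGroup Bool →* G, φ w = 1
  | [], _, h => by simpa using h 1
  | [v], hl, h => ⟨v, hl v (by simp), fun φ => by simpa using h φ⟩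
  | v :: u :: l, hl, h => by
    refine exists_ne_one_forall_map_eq_one (lawCombine v u :: l.map conjEndo) ?_ fun φ => ?_
    · simp only [List.mem_cons, List.mem_map]
      rintro _ (rfl | ⟨w, hw, rfl⟩)
      · exact lawCombine_ne_one (hl v (by simp)) (hl u (by simp))
      · exact (map_ne_one_iff _ conjEndo_injective).2 (hl w (by simp [hw]))
    obtain ⟨w, hw, hφw⟩ := h (φ.comp conjEndo)
    rcases List.mem_cons.1 hw with rfl | hw
    · exact ⟨_, List.mem_cons_self, map_lawCombine_eq_one φ (.inl hφw)⟩
    rcases List.mem_cons.1 hw with rfl | hw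
    · exact ⟨_, List.mem_cons_self, map_lawCombine_eq_one φ (.inr hφw)⟩
    · exact ⟨conjEndo w, List.mem_cons_of_mem _ (List.mem_map_of_mem hw), hφw⟩
termination_by l => l.length

theorem lift_ite_of (φ : FreeGroup Bool →* G) :
    lift (fun x => if x then φ (of true) else φ (of false)) = φ :=
  ext_hom _ _ fun x => by cases x <;> simp

end FreeGroup

open FreeGroup (lift of)

theorem satisfiesNontrivialIdentity_iff {G : Type*} [Group G] :
    SatisfiesNontrivialIdentity G ↔
      ∃ w : FreeGroup Bool, w ≠ 1 ∧ ∀ φ : FreeGroup Bool →* G, φ w = 1 :=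
  exists_congr fun _ => and_congr_right fun _ =>
    ⟨fun h φ => FreeGroup.lift_ite_of φ ▸ h _ _, fun h _ _ => h _⟩

def SatisfiesPositiveLawDisjunction (G : Type*) [Group G] : Prop :=
  ∃ (k : ℕ) (t s : Fin k → List Bool), (∀ i, t i ≠ s i) ∧
    ∀ a b : G, ∃ i, posWordEval a b (t i) = posWordEval a b (s i)

theorem posWordEval_eq_lift {G : Type*} [Group G] (a b : G) (l : List Bool) :
    posWordEval a b l = lift (fun x => if x then a else b) (l.map of).prod := by
  simp [posWordEval, map_list_prod, Function.comp_def]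

namespace GroupLang

open Language

def wordTerm : List (Bool × Bool) → GroupLang.Term Bool
  | [] => .func (show GroupLang.Functions 0 from ()) finZeroElim
  | (x, e) :: L => .func (show GroupLang.Functions 2 from ())
      ![cond e (.var x) (.func (show GroupLang.Functions 1 from ()) ![.var x]), wordTerm L]

theorem realize_wordTerm {G : Type*} [Group G] (v : Bool → G) (L : List (Bool × Bool)) :
    (wordTerm L).realize v = lift v (FreeGroup.mk L) := by
  induction L with
  | nil => rfl
  | cons c L ih =>
    obtain ⟨x, e⟩ := c
    rw [FreeGroup.lift_mk, List.map_cons, List.prod_cons, ← FreeGroup.lift_mk, ← ih]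
    cases e
    · exact (rfl : (v x)⁻¹ * (wordTerm L).realize v = _)
    · exact (rfl : v x * (wordTerm L).realize v = _)

def neOneFormula (w : FreeGroup Bool) : GroupLang.Formula Bool :=
  ((wordTerm w.toWord).equal (wordTerm [])).not

theorem realize_neOneFormula {G : Type*} [Group G] (v : Bool → G) (w : FreeGroup Bool) :
    (neOneFormula w).Realize v ↔ lift v w ≠ 1 := by
  rw [neOneFormula, Formula.realize_not, Formula.realize_equal, realize_wordTerm,
    realize_wordTerm, FreeGroup.mk_toWord, ← FreeGroup.one_eq_mk, map_one]

end GroupLang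

namespace AlephZeroSaturated

open Language

variable {G : Type*} [Group G]

theorem exists_realize_of_countable (hsat : AlephZeroSaturated G) {ι : Type*} [Countable ι]
    {k : ℕ} (c : Fin k → G) (p : ι → GroupLang.Formula (Fin k ⊕ Fin 1))
    (h : ∀ s : Finset ι, ∃ g : G, ∀ i ∈ s, (p i).Realize (Sum.elim c fun _ => g)) :
    ∃ g : G, ∀ i, (p i).Realize (Sum.elim c fun _ => g) := by
  classical
  cases isEmpty_or_nonempty ι
  · exact ⟨1, isEmptyElim⟩
  obtain ⟨e, he⟩ := exists_surjective_nat ι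
  obtain ⟨g, hg⟩ := hsat k c (p ∘ e) fun s =>
    (h (s.image e)).imp fun g hg n hn => hg _ (Finset.mem_image_of_mem e hn)
  exact ⟨g, he.forall.2 hg⟩

/-- The first variable is realized against the formulas "some second variable satisfies this
finite part of `p`", the second one against `p` with the first as parameter. -/
theorem exists_realize_pair (hsat : AlephZeroSaturated G) {ι : Type*} [Countable ι]
    (p : ι → GroupLang.Formula Bool)
    (h : ∀ s : Finset ι, ∃ v : Bool → G, ∀ i ∈ s, (p i).Realize v) :
    ∃ v : Bool → G, ∀ i, (p i).Realize v := by
  classical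
  let e : Bool → Fin 1 ⊕ Fin 1 := fun b => if b then .inl 0 else .inr 0
  have he (a b : G) : Sum.elim (fun _ => a) (fun _ => b) ∘ e = fun x => if x then a else b :=
    funext fun x => by cases x <;> rfl
  let q (s : Finset ι) : GroupLang.Formula (Fin 0 ⊕ Fin 1) :=
    ((Formula.iInf fun i : s => (p i).relabel e).iExs (Fin 1)).relabel Sum.inr
  obtain ⟨a, ha⟩ := hsat.exists_realize_of_countable finZeroElim q fun S => by
    obtain ⟨v, hv⟩ := h (S.biUnion id)
    refine ⟨v true, fun s hs => ?_⟩
    have hv' : (fun x => if x then v true else v false) = v := funext fun x => by cases x <;> rfl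
    simp only [q, Formula.realize_relabel, Formula.realize_iExs, Formula.realize_iInf]
    refine ⟨fun _ => v false, fun i => ?_⟩
    simpa [he, hv'] using hv i (Finset.mem_biUnion.2 ⟨s, hs, i.2⟩)
  obtain ⟨b, hb⟩ := hsat.exists_realize_of_countable (fun _ => a) (fun i => (p i).relabel e)
    fun s => by
      obtain ⟨y, hy⟩ := by simpa [q] using ha s
      refine ⟨y 0, fun i hi => ?_⟩
      rw [Formula.realize_relabel]
      convert hy i hi using 3
      exact funext fun j => congrArg y (Subsingleton.elim 0 j)
  exact ⟨fun x => if x then a else b, fun i => by simpa [he] using hb i⟩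

theorem exists_hom_forall_ne_one (hsat : AlephZeroSaturated G) {ι : Type*} [Countable ι]
    (w : ι → FreeGroup Bool)
    (h : ∀ s : Finset ι, ∃ φ : FreeGroup Bool →* G, ∀ i ∈ s, φ (w i) ≠ 1) :
    ∃ φ : FreeGroup Bool →* G, ∀ i, φ (w i) ≠ 1 := by
  obtain ⟨v, hv⟩ := hsat.exists_realize_pair (fun i => GroupLang.neOneFormula (w i)) fun s => by
    obtain ⟨φ, hφ⟩ := h s
    refine ⟨lift.symm φ, fun i hi => ?_⟩
    rw [GroupLang.realize_neOneFormula, Equiv.apply_symm_apply]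
    exact hφ i hi
  exact ⟨lift v, fun i => (GroupLang.realize_neOneFormula v (w i)).1 (hv i)⟩

theorem containsFreeGroupRank2_or_satisfiesNontrivialIdentity (hsat : AlephZeroSaturated G) :
    ContainsFreeGroupRank2 G ∨ SatisfiesNontrivialIdentity G := by
  classical
  refine or_iff_not_imp_right.2 fun hlaw => ?_
  obtain ⟨φ, hφ⟩ := hsat.exists_hom_forall_ne_one
    (Subtype.val : {w : FreeGroup Bool // w ≠ 1} → _) fun s => by
      by_contra! hs
      refine hlaw (satisfiesNontrivialIdentity_iff.2 <|
        FreeGroup.exists_ne_one_forall_map_eq_one (s.toList.map Subtype.val) ?_ fun φ => ?_)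
      · simp only [List.mem_map]
        rintro _ ⟨w, -, rfl⟩
        exact w.2
      · simpa using hs φ
  exact ⟨φ, (injective_iff_map_eq_one φ).2 fun w hw => by_contra fun hne => hφ ⟨w, hne⟩ hw⟩

theorem containsFreeSubsemigroupRank2_or_satisfiesPositiveLawDisjunction
    (hsat : AlephZeroSaturated G) :
    ContainsFreeSubsemigroupRank2 G ∨ SatisfiesPositiveLawDisjunction G := by
  classical
  refine or_iff_not_imp_right.2 fun hdisj => ?_
  let pos (l : List Bool) : FreeGroup Bool := (l.map of).prod
  obtain ⟨φ, hφ⟩ := hsat.exists_hom_forall_ne_one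
    (fun q : {q : List Bool × List Bool // q.1 ≠ [] ∧ q.2 ≠ [] ∧ q.1 ≠ q.2} =>
      pos q.1.1 * (pos q.1.2)⁻¹) fun s => by
    by_contra! hs
    let e := s.equivFin.symm
    refine hdisj ⟨s.card, fun i => (e i).1.1.1, fun i => (e i).1.1.2, fun i => (e i).1.2.2.2,
      fun a b => ?_⟩
    obtain ⟨q, hq, hφq⟩ := hs (lift fun x => if x then a else b)
    refine ⟨e.symm ⟨q, hq⟩, ?_⟩
    simpa [posWordEval_eq_lift, mul_inv_eq_one] using hφq
  refine ⟨φ (of true), φ (of false), fun w₁ w₂ h₁ h₂ h₁₂ heq => hφ ⟨(w₁, w₂), h₁, h₂, h₁₂⟩ ?_⟩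
  rw [map_mul, map_inv, mul_inv_eq_one]
  simpa [posWordEval_eq_lift, FreeGroup.lift_ite_of] using heq

end AlephZeroSaturated

/-- In an ℵ₀-saturated group `G`, either `G` contains a free subgroup of rank 2 or `G`
satisfies a nontrivial identity in two variables; and in the latter case, either `G`
contains a free subsemigroup of rank 2 or `G` satisfies a finite disjunction of nontrivial
positive identities in two variables. -/
theorem aleph0_saturated_dichotomy (G : Type*) [Group G]
    (hsat : AlephZeroSaturated G) :
    (ContainsFreeGroupRank2 G ∨ SatisfiesNontrivialIdentity G) ∧
      (SatisfiesNontrivialIdentity G →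
        ContainsFreeSubsemigroupRank2 G ∨
          ∃ (k : ℕ) (t s : Fin k → List Bool), (∀ i, t i ≠ s i) ∧
            ∀ a b : G, ∃ i, posWordEval a b (t i) = posWordEval a b (s i)) :=
  ⟨hsat.containsFreeGroupRank2_or_satisfiesNontrivialIdentity,
    fun _ => hsat.containsFreeSubsemigroupRank2_or_satisfiesPositiveLawDisjunction⟩
end

section
/- Let (G_n)_{n ∈ ℕ} be a family of finite groups and suppose there is an infinite set U ⊆ ℕ such that for every n in U the group G_n involves the alternating group A_n. Then for every nonprincipal ultrafilter 𝒰 on ℕ containing U, the ultraproduct of the G_n with respect to 𝒰 contains a free subgroup of rank 2. -/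
open FirstOrder

/-- A group `G` involves a group `H` (`H` is a section of `G`) if some subgroup of `G`
has a quotient isomorphic to `H`, equivalently there is a subgroup of `G` admitting a
surjective homomorphism onto `H`. -/
def Involves (G : Type*) [Group G] (H : Type*) [Group H] : Prop :=
  ∃ (A : Subgroup G) (φ : ↥A →* H), Function.Surjective φ

/-!
Words of length at most `k` in a free group `F` on finitely many generators are detected by a
finite permutation representation: let each generator act on the ball `B_k` of radius `k` by
left translation wherever this stays inside `B_k`, extended arbitrarily to a permutation.
Reading a reduced word `w` from the right moves `1` along its suffixes, so `w` sends `1` to `w`.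
Doubling this action and embedding `B_k ⊕ B_k` into `Fin n` gives, as soon as `2 |B_k| ≤ n`, a
homomorphism `F → A_n` that is nontrivial on `B_k ∖ {1}`. Since `F` is free, it lifts through
any section of `G_n` isomorphic to `A_n`. Along a nonprincipal ultrafilter `n → ∞`, so the
radius that can be separated grows without bound and the induced map from `F` to the
ultraproduct is injective.
-/

namespace Set

variable {Γ : Type*} [Group Γ] (S : Set Γ) [Finite S]

open scoped Classical in
noncomputable def leftMulPerm (g : Γ) : Equiv.Perm S :=
  Equiv.extendSubtype (p := fun x : S => g * x ∈ S) (q := fun x : S => g⁻¹ * x ∈ S)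
    { toFun x := ⟨⟨g * x.1, x.2⟩, by simp⟩
      invFun y := ⟨⟨g⁻¹ * y.1, y.2⟩, by simp⟩
      left_inv x := by simp
      right_inv y := by simp }

variable {S}

theorem coe_leftMulPerm_apply {g : Γ} {x : S} (h : g * x ∈ S) :
    (leftMulPerm S g x : Γ) = g * x := by
  classical
  rw [leftMulPerm, Equiv.extendSubtype_apply_of_mem (p := fun x : S => g * x ∈ S) _ _ h]
  rfl

theorem coe_leftMulPerm_inv_apply {g : Γ} {x : S} (h : g⁻¹ * x ∈ S) :
    ((leftMulPerm S g)⁻¹ x : Γ) = g⁻¹ * x := by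
  have hx : leftMulPerm S g ⟨g⁻¹ * x, h⟩ = x :=
    Subtype.ext (by rw [coe_leftMulPerm_apply (by simp)]; simp)
  rw [Equiv.Perm.inv_eq_iff_eq.mpr hx.symm]

end Set

namespace Equiv.Perm

theorem exists_injective_hom_alternatingGroup {β : Type*} [Finite β] {n : ℕ}
    (hn : 2 * Nat.card β ≤ n) :
    ∃ f : Perm β →* alternatingGroup (Fin n), Function.Injective f := by
  classical
  have := Fintype.ofFinite β
  obtain ⟨ι⟩ : Nonempty (β ⊕ β ↪ Fin n) := Function.Embedding.nonempty_of_card_le <| by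
    simpa [two_mul, Nat.card_eq_fintype_card] using hn
  -- `σ ↦ σ ⊕ σ` is injective, and even since `sign (σ ⊕ σ) = sign σ ^ 2`
  let double : Perm β →* Perm (Fin n) :=
    (viaEmbeddingHom ι).comp ((sumCongrHom β β).comp ((MonoidHom.id _).prod (MonoidHom.id _)))
  have hdouble : ∀ σ, double σ ∈ alternatingGroup (Fin n) := fun σ => by
    simp [double, viaEmbeddingHom_apply, viaEmbedding, sign_sumCongr]
  refine ⟨double.codRestrict _ hdouble, fun σ τ h => ?_⟩
  have h' := sumCongrHom_injective (viaEmbeddingHom_injective ι (congrArg Subtype.val h))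
  exact congrArg Prod.fst h'

end Equiv.Perm

namespace FreeGroup

variable {α : Type*} [DecidableEq α]

variable (α) in
def ball (k : ℕ) : Set (FreeGroup α) := {x | x.norm ≤ k}

instance [Finite α] (k : ℕ) : Finite (ball α k) :=
  Set.Finite.to_subtype <| (List.finite_length_le (α := α × Bool) k).image mk |>.subset
    fun x hx => ⟨x.toWord, hx, mk_toWord⟩

theorem one_mem_ball (k : ℕ) : (1 : FreeGroup α) ∈ ball α k := by simp [ball]

theorem ball_mono {j k : ℕ} (h : j ≤ k) : ball α j ⊆ ball α k := fun _ hx => le_trans hx h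

theorem norm_mk_of_isReduced {L : List (α × Bool)} (h : IsReduced L) :
    (mk L).norm = L.length := by
  rw [norm, toWord_mk, h.reduce_eq]

variable [Finite α]

noncomputable def ballAction (k : ℕ) : FreeGroup α →* Equiv.Perm (ball α k) :=
  lift fun a => Set.leftMulPerm (ball α k) (of a)

theorem ballAction_of (k : ℕ) (a : α) :
    ballAction k (of a) = Set.leftMulPerm (ball α k) (of a) :=
  lift_apply_of

theorem coe_ballAction_mk_one {k : ℕ} {L : List (α × Bool)} (hL : IsReduced L)
    (hk : L.length ≤ k) : (ballAction k (mk L) ⟨1, one_mem_ball k⟩ : FreeGroup α) = mk L := by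
  induction L with
  | nil => exact congrArg Subtype.val (Equiv.Perm.one_apply _)
  | cons p L ih =>
    obtain ⟨a, b⟩ := p
    have hmem : mk ((a, b) :: L) ∈ ball α k := by
      simpa [ball, norm_mk_of_isReduced hL] using hk
    rw [show mk ((a, b) :: L) = mk [(a, b)] * mk L from rfl, _root_.map_mul,
      Equiv.Perm.mul_apply]
    have ih' := ih (hL.infix (List.suffix_cons _ _).isInfix) (Nat.le_of_succ_le hk)
    cases b with
    | true =>
      rw [show mk [(a, true)] = of a from rfl, ballAction_of,
        Set.coe_leftMulPerm_apply (by rw [ih']; exact hmem), ih']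
    | false =>
      rw [show mk [(a, false)] = (of a)⁻¹ from rfl, _root_.map_inv, ballAction_of,
        Set.coe_leftMulPerm_inv_apply (by rw [ih']; exact hmem), ih']

theorem ballAction_ne_one {k : ℕ} {x : FreeGroup α} (hx : x ≠ 1) (hxk : x ∈ ball α k) :
    ballAction k x ≠ 1 := by
  intro h
  have := coe_ballAction_mk_one (isReduced_toWord (x := x)) hxk
  rw [mk_toWord, h] at this
  exact hx this.symm

theorem exists_hom_alternatingGroup_ne_one_on_ball {k n : ℕ}
    (hn : 2 * Nat.card (ball α k) ≤ n) :
    ∃ θ : FreeGroup α →* alternatingGroup (Fin n), ∀ x ∈ ball α k, x ≠ 1 → θ x ≠ 1 := by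
  obtain ⟨f, hf⟩ := Equiv.Perm.exists_injective_hom_alternatingGroup hn
  exact ⟨f.comp (ballAction k), fun x hxk hx =>
    (map_ne_one_iff f hf).mpr (ballAction_ne_one hx hxk)⟩

theorem exists_homs_alternatingGroup_eventually_ne_one :
    ∃ θ : ∀ n, FreeGroup α →* alternatingGroup (Fin n),
      ∀ x : FreeGroup α, x ≠ 1 → ∀ᶠ n in Filter.atTop, θ n x ≠ 1 := by
  have h (n : ℕ) : ∃ θ : FreeGroup α →* alternatingGroup (Fin n), ∀ k ≤ n,
      2 * Nat.card (ball α k) ≤ n → ∀ x ∈ ball α k, x ≠ 1 → θ x ≠ 1 := by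
    -- separate the largest ball that fits
    set m := Nat.findGreatest (fun k => 2 * Nat.card (ball α k) ≤ n) n
    by_cases hm : 2 * Nat.card (ball α m) ≤ n
    · obtain ⟨θ, hθ⟩ := exists_hom_alternatingGroup_ne_one_on_ball hm
      exact ⟨θ, fun k hkn hk x hx => hθ x (ball_mono (Nat.le_findGreatest hkn hk) hx)⟩
    · refine ⟨1, fun k hkn hk => (hm ?_).elim⟩
      exact Nat.findGreatest_spec (P := fun k => 2 * Nat.card (ball α k) ≤ n) hkn hk
  choose θ hθ using h
  refine ⟨θ, fun x hx => ?_⟩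
  filter_upwards [Filter.eventually_ge_atTop (max x.norm (2 * Nat.card (ball α x.norm)))]
    with n hn
  exact hθ n x.norm (le_of_max_le_left hn) (le_of_max_le_right hn) x (le_refl x.norm) hx

end FreeGroup

theorem Involves.exists_hom_ker_le {G H : Type*} [Group G] [Group H] (h : Involves G H)
    {α : Type*} (θ : FreeGroup α →* H) : ∃ ψ : FreeGroup α →* G, ψ.ker ≤ θ.ker := by
  obtain ⟨A, φ, hφ⟩ := h
  choose g hg using fun a => hφ (θ (FreeGroup.of a))
  have hθ : φ.comp (FreeGroup.lift g) = θ := FreeGroup.ext_hom _ _ fun a => by simp [hg]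
  refine ⟨A.subtype.comp (FreeGroup.lift g), fun x hx => ?_⟩
  rw [MonoidHom.mem_ker, ← hθ, MonoidHom.comp_apply,
    A.subtype_injective (by simpa using hx : A.subtype (FreeGroup.lift g x) = A.subtype 1), map_one]

namespace UProd

variable {ι : Type*} (𝒰 : Ultrafilter ι) (G : ι → Type*) [∀ i, Group (G i)]

def mkHom : (∀ i, G i) →* UProd 𝒰 G where
  toFun := UProd.mk 𝒰 G
  map_one' := rfl
  map_mul' _ _ := rfl

variable {𝒰 G}

theorem mk_eq_one_iff {f : ∀ i, G i} :
    UProd.mk 𝒰 G f = 1 ↔ ∀ᶠ i in (𝒰 : Filter ι), f i = 1 :=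
  Quotient.eq

theorem injective_of_eventually_ne_one {K : Type*} [Group K] (ψ : ∀ i, K →* G i)
    (hψ : ∀ x : K, x ≠ 1 → ∀ᶠ i in (𝒰 : Filter ι), ψ i x ≠ 1) :
    Function.Injective ((mkHom 𝒰 G).comp (MonoidHom.pi ψ)) := by
  refine (injective_iff_map_eq_one _).mpr fun x hx => ?_
  by_contra hx1
  obtain ⟨i, hi, hi1⟩ := ((hψ x hx1).and (mk_eq_one_iff.mp hx)).exists
  exact hi hi1

end UProd

theorem ultraproduct_involving_alternating_contains_free_general (G : ℕ → Type*)
    [∀ n, Group (G n)] (U : Set ℕ)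
    (hinv : ∀ n ∈ U, Involves (G n) ↥(alternatingGroup (Fin n)))
    (𝒰 : Ultrafilter ℕ) (hnp : ∀ n : ℕ, (𝒰 : Filter ℕ) ≠ pure n) (hU𝒰 : U ∈ 𝒰) :
    ContainsFreeGroupRank2 (UProd 𝒰 G) := by
  obtain ⟨θ, hθ⟩ := FreeGroup.exists_homs_alternatingGroup_eventually_ne_one (α := Bool)
  have hlift (n : ℕ) : ∃ ψ : FreeGroup Bool →* G n, n ∈ U → ψ.ker ≤ (θ n).ker := by
    by_cases hn : n ∈ U
    · obtain ⟨ψ, hψ⟩ := (hinv n hn).exists_hom_ker_le (θ n)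
      exact ⟨ψ, fun _ => hψ⟩
    · exact ⟨1, fun h => absurd h hn⟩
  choose ψ hψ using hlift
  have h𝒰 : (𝒰 : Filter ℕ) ≤ Filter.atTop :=
    (𝒰.le_cofinite_or_eq_pure.resolve_right fun ⟨n, hn⟩ => hnp n (by rw [hn]; rfl)).trans_eq
      Nat.cofinite_eq_atTop
  refine ⟨_, UProd.injective_of_eventually_ne_one ψ fun x hx => ?_⟩
  filter_upwards [h𝒰 (hθ x hx), hU𝒰] with n hθn hn hψn
  exact hθn (hψ n hn hψn)

/-- If `(G n)` is a family of finite groups such that, for every `n` in some infinite set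
`U ⊆ ℕ`, the group `G n` involves the alternating group `A_n`, then for every nonprincipal
ultrafilter containing `U` the corresponding ultraproduct of the `G n` contains a free
subgroup of rank 2. -/
theorem ultraproduct_involving_alternating_contains_free (G : ℕ → Type*)
    [∀ n, Group (G n)] [∀ n, Finite (G n)] (U : Set ℕ) (hU : U.Infinite)
    (hinv : ∀ n ∈ U, Involves (G n) ↥(alternatingGroup (Fin n)))
    (𝒰 : Ultrafilter ℕ) (hnp : ∀ n : ℕ, (𝒰 : Filter ℕ) ≠ pure n) (hU𝒰 : U ∈ 𝒰) :
    ContainsFreeGroupRank2 (UProd 𝒰 G) :=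
  ultraproduct_involving_alternating_contains_free_general G U hinv 𝒰 hnp hU𝒰
end

section
/- An ℵ0-saturated group is amenable if and only if it is uniformly amenable. -/
open FirstOrder

/-- A group is amenable if it carries a finitely additive left-invariant probability
measure defined on all subsets. -/
def Amenable (G : Type*) [Group G] : Prop :=
  ∃ μ : Set G → ℝ, (∀ X, 0 ≤ μ X) ∧ μ Set.univ = 1 ∧
    (∀ X Y, Disjoint X Y → μ (X ∪ Y) = μ X + μ Y) ∧
    (∀ (g : G) (X : Set G), μ ((g * ·) '' X) = μ X)

open scoped Pointwise in
/-- A group is uniformly amenable if there is a function `α` bounding the size of Følner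
sets: for every finite subset `A` and every `ε ∈ (0,1]` there is a finite subset `V` with
`|V| ≤ α ε |A|` and `|A * V| < (1 + ε) * |V|`. -/
def UniformlyAmenable (G : Type*) [Group G] : Prop :=
  ∃ α : ℝ → ℕ → ℕ, ∀ (A : Finset G) (ε : ℝ), 0 < ε → ε ≤ 1 →
    ∃ V : Finset G, V.card ≤ α ε A.card ∧
      (((A : Set G) * (V : Set G)).ncard : ℝ) < (1 + ε) * V.card

/-!
Amenability is equivalent to the Følner condition. An invariant mean is obtained as an
ultrafilter limit of the counting densities of Følner sets. Conversely, if some finite `A`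
expands every finite set by a factor `1 + ε`, then a power `B` of `A` doubles every finite set,
so Hall's marriage theorem gives a map `g ↦ b g * g` from `G × Fin 2` injectively into `G` with
`b g ∈ B`; its fibres cut `G` into `2 |B|` pieces whose translates are pairwise disjoint, while
for each of the two sheets the untranslated pieces cover `G`. An invariant mean would give
`2 ≤ 1`.

Uniform amenability is the Følner condition with a bound `N(ε, |A|)` on `|V|`. If there were no
such bound for some `ε` and `k`, the formulas "no `j`-element `V` has `|A V| ≤ l`", for
`l < (1 + ε) j`, would form a finitely satisfiable countable type in the `k` elements of `A`.
By `ℵ₀`-saturation some `A` realizes it, and that `A` has no Følner set at all.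
-/

open scoped Pointwise ENNReal symmDiff
open Function Filter Topology MeasureTheory

def IsFinitelyAdditive {α : Type*} (μ : Set α → ℝ) : Prop :=
  ∀ X Y, Disjoint X Y → μ (X ∪ Y) = μ X + μ Y

namespace IsFinitelyAdditive

variable {α ι : Type*} {μ : Set α → ℝ}

lemma empty (hμ : IsFinitelyAdditive μ) : μ ∅ = 0 := by
  simpa using hμ ∅ ∅ (Set.disjoint_empty _)

lemma biUnion_finset (hμ : IsFinitelyAdditive μ) [DecidableEq ι] (s : Finset ι) {S : ι → Set α}
    (hS : (s : Set ι).PairwiseDisjoint S) : μ (⋃ i ∈ s, S i) = ∑ i ∈ s, μ (S i) := by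
  induction s using Finset.induction_on with
  | empty => simpa using hμ.empty
  | @insert a s ha ih =>
    rw [Finset.coe_insert] at hS
    rw [Finset.set_biUnion_insert, Finset.sum_insert ha, hμ, ih (hS.subset (Set.subset_insert _ _))]
    exact Set.disjoint_iUnion₂_right.2 fun i hi =>
      hS (Set.mem_insert a _) (Set.mem_insert_of_mem a hi) (ne_of_mem_of_not_mem hi ha).symm

lemma le_univ (hμ : IsFinitelyAdditive μ) (h0 : ∀ X, 0 ≤ μ X) (X : Set α) :
    μ X ≤ μ Set.univ := by
  rw [← Set.union_compl_self X, hμ X Xᶜ disjoint_compl_right]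
  linarith [h0 Xᶜ]

end IsFinitelyAdditive

lemma Set.Finite.ncard_le_iff_subset_range {α : Type*} [Nonempty α] {S : Set α} (hS : S.Finite)
    {l : ℕ} : S.ncard ≤ l ↔ ∃ w : Fin l → α, S ⊆ Set.range w := by
  classical
  constructor
  · intro hl
    obtain ⟨n, f, rfl⟩ := hS.fin_embedding
    rw [Set.ncard_range_of_injective f.injective, Nat.card_eq_fintype_card, Fintype.card_fin] at hl
    refine ⟨extend (Fin.castLE hl) f fun _ => Classical.arbitrary α, ?_⟩
    rintro _ ⟨a, rfl⟩
    exact ⟨Fin.castLE hl a, (Fin.castLE_injective hl).extend_apply _ _ a⟩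
  · rintro ⟨w, hw⟩
    calc S.ncard ≤ (Finset.univ.image w : Set α).ncard := by
          rw [Finset.coe_image, Finset.coe_univ, Set.image_univ]
          exact Set.ncard_le_ncard hw (Set.finite_range w)
      _ ≤ l := by
          rw [Set.ncard_coe_finset]
          exact Finset.card_image_le.trans_eq (Finset.card_fin l)

lemma exists_finset_card_eq_iff_exists_injective {α : Type*} {j : ℕ} {P : Set α → Prop} :
    (∃ V : Finset α, V.card = j ∧ P V) ↔ ∃ v : Fin j → α, Injective v ∧ P (Set.range v) := by
  classical
  constructor
  · rintro ⟨V, rfl, hV⟩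
    obtain ⟨n, f, hf⟩ := V.finite_toSet.fin_embedding
    have hn : n = V.card := by
      simpa [hf] using (Set.ncard_range_of_injective f.injective).symm
    subst hn
    exact ⟨f, f.injective, hf ▸ hV⟩
  · rintro ⟨v, hv, hP⟩
    refine ⟨Finset.univ.image v, ?_, ?_⟩
    · rw [Finset.card_image_of_injective _ hv, Finset.card_fin]
    · rwa [Finset.coe_image, Finset.coe_univ, Set.image_univ]

lemma Finset.range_coe_equivFin_symm {α : Type*} (A : Finset α) :
    Set.range (fun i => (A.equivFin.symm i : α)) = A := by
  rw [← Function.comp_def, A.equivFin.symm.surjective.range_comp, Subtype.range_coe]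

lemma Sum.elim_comp_finSumFinEquiv_symm {α : Type*} {m n : ℕ} (a : Fin (m + n) → α) :
    Sum.elim (a ∘ finSumFinEquiv ∘ Sum.inl) (a ∘ finSumFinEquiv ∘ Sum.inr) ∘ finSumFinEquiv.symm
      = a := by
  funext i
  obtain ⟨y, rfl⟩ := finSumFinEquiv.surjective i
  cases y <;> simp

lemma exists_forall_mem_of_forall_le {α : Type*} {P : ℕ → α → Prop}
    (h : ∀ N, ∃ a, ∀ n ≤ N, P n a) (s : Finset ℕ) : ∃ a, ∀ n ∈ s, P n a :=
  let ⟨a, ha⟩ := h (s.sup id)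
  ⟨a, fun n hn => ha n (Finset.le_sup (f := id) hn)⟩

lemma Finset.ncard_coe_mul {G : Type*} [Group G] [DecidableEq G] (A V : Finset G) :
    ((A : Set G) * V).ncard = (A * V).card := by
  rw [← Finset.coe_mul, Set.ncard_coe_finset]

def FolnerCondition (G : Type*) [Group G] : Prop :=
  ∀ (A : Finset G) (ε : ℝ), 0 < ε → ∃ V : Finset G, (((A : Set G) * V).ncard : ℝ) < (1 + ε) * V.card

section

variable {G : Type*} [Group G]

lemma not_amenable_of_two_to_one {B : Finset G} {b : G × Fin 2 → G} (hb : ∀ p, b p ∈ B)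
    (hinj : Injective fun p => b p * p.1) : ¬ Amenable G := by
  classical
  rintro ⟨μ, h0, h1, hμ : IsFinitelyAdditive μ, hinv⟩
  let P : Fin 2 × G → Set G := fun q => {g | b (g, q.1) = q.2}
  have hrow (i : Fin 2) : ∑ x ∈ B, μ (P (i, x)) = 1 := by
    have hcover : (⋃ x ∈ B, P (i, x)) = Set.univ :=
      Set.eq_univ_of_forall fun g => Set.mem_biUnion (hb (g, i)) rfl
    rw [← hμ.biUnion_finset, hcover, h1]
    intro x _ y _ hxy
    exact Set.disjoint_left.2 fun g (hx : _ = x) (hy : _ = y) => hxy (hx ▸ hy)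
  have hdisj : (↑(Finset.univ ×ˢ B : Finset (Fin 2 × G)) : Set (Fin 2 × G)).PairwiseDisjoint
      fun q => (q.2 * ·) '' P q := by
    rintro q - q' - hqq'
    refine Set.disjoint_left.2 ?_
    rintro _ ⟨g, hg, rfl⟩ ⟨g', hg', he⟩
    have h := @hinj (g', q'.1) (g, q.1) (show b _ * g' = b _ * g by rw [hg, hg']; exact he)
    simp only [Prod.mk.injEq] at h
    exact hqq' (Prod.ext h.2.symm (by rw [← hg, ← hg', h.1, h.2]))
  have := hμ.le_univ h0 (⋃ q ∈ Finset.univ ×ˢ B, (q.2 * ·) '' P q)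
  rw [hμ.biUnion_finset _ hdisj, Finset.sum_product] at this
  simp only [hinv, hrow, Finset.sum_const, Finset.card_univ, Fintype.card_fin] at this
  norm_num [h1] at this

lemma exists_two_to_one_of_doubling [DecidableEq G] {B : Finset G}
    (hB : ∀ V : Finset G, 2 * V.card ≤ (B * V).card) :
    ∃ b : G × Fin 2 → G, (∀ p, b p ∈ B) ∧ Injective fun p => b p * p.1 := by
  let t : G × Fin 2 → Finset G := fun p => B.image (· * p.1)
  have hall (s : Finset (G × Fin 2)) : s.card ≤ (s.biUnion t).card := by
    have hunion : s.biUnion t = B * s.image Prod.fst := by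
      ext x
      simp only [t, Finset.mem_biUnion, Finset.mem_image, Finset.mem_mul]
      constructor
      · rintro ⟨p, hp, b, hb, rfl⟩
        exact ⟨b, hb, p.1, ⟨p, hp, rfl⟩, rfl⟩
      · rintro ⟨b, hb, _, ⟨p, hp, rfl⟩, rfl⟩
        exact ⟨p, hp, b, hb, rfl⟩
    calc s.card ≤ (s.image Prod.fst ×ˢ (Finset.univ : Finset (Fin 2))).card :=
          Finset.card_le_card fun p hp =>
          Finset.mem_product.2 ⟨Finset.mem_image_of_mem _ hp, Finset.mem_univ _⟩
      _ = 2 * (s.image Prod.fst).card := by simp [mul_comm]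
      _ ≤ (s.biUnion t).card := hunion ▸ hB _
  obtain ⟨f, hf, hft⟩ := (Finset.all_card_le_biUnion_card_iff_exists_injective t).1 hall
  choose b hb hbf using fun p => Finset.mem_image.1 (hft p)
  exact ⟨b, hb, fun p q h => hf (by simpa only [hbf] using h)⟩

lemma exists_doubling_of_not_folnerCondition [DecidableEq G] (h : ¬ FolnerCondition G) :
    ∃ B : Finset G, ∀ V : Finset G, 2 * V.card ≤ (B * V).card := by
  simp only [FolnerCondition, not_forall, not_exists, not_lt, Finset.ncard_coe_mul] at h
  obtain ⟨A, ε, hε, hA⟩ := h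
  have hpow (m : ℕ) (V : Finset G) : (1 + ε) ^ m * V.card ≤ (A ^ m * V).card := by
    induction m generalizing V with
    | zero => simp
    | succ m ih =>
      calc (1 + ε) ^ (m + 1) * V.card = (1 + ε) * ((1 + ε) ^ m * V.card) := by ring
        _ ≤ (1 + ε) * (A ^ m * V).card := by gcongr; exact ih V
        _ ≤ (A ^ (m + 1) * V).card := by rw [pow_succ', mul_assoc]; exact hA _
  obtain ⟨m, hm⟩ := pow_unbounded_of_one_lt (2 : ℝ) (by linarith : (1 : ℝ) < 1 + ε)
  refine ⟨A ^ m, fun V => ?_⟩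
  have : (2 : ℝ) * V.card ≤ (A ^ m * V).card := by
    nlinarith [hpow m V, (Nat.cast_nonneg V.card : (0 : ℝ) ≤ V.card)]
  exact_mod_cast this

theorem Amenable.folnerCondition (h : Amenable G) : FolnerCondition G := by
  classical
  by_contra hF
  obtain ⟨B, hB⟩ := exists_doubling_of_not_folnerCondition hF
  obtain ⟨b, hbB, hinj⟩ := exists_two_to_one_of_doubling hB
  exact not_amenable_of_two_to_one hbB hinj h

lemma card_smul_symmDiff_add_le [DecidableEq G] {A V : Finset G} {g : G} (h1 : 1 ∈ A)
    (hg : g ∈ A) : ((g • V) ∆ V).card + 2 * V.card ≤ 2 * (A * V).card := by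
  have hsymm : ((g • V) ∆ V).card ≤ 2 * ((g • V) \ V).card := by
    calc ((g • V) ∆ V).card ≤ ((g • V) \ V).card + (V \ g • V).card :=
          Finset.card_union_le _ _
      _ = 2 * ((g • V) \ V).card := by
          rw [← Finset.card_sdiff_comm (Finset.card_smul_finset g V)]; ring
  have hunion : ((g • V) \ V).card + V.card ≤ (A * V).card := by
    rw [Finset.card_sdiff_add_card]
    exact Finset.card_le_card (Finset.union_subset (Finset.smul_finset_subset_mul hg)
      (by simpa using Finset.smul_finset_subset_mul (t := V) h1))
  omega

theorem isFoelner_count {ι : Type*} {l : Filter ι} [MeasurableSpace G]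
    [MeasurableSingletonClass G] [DecidableEq G] {A V : ι → Finset G} {ε : ι → ℝ}
    (hA1 : ∀ i, 1 ∈ A i) (hA : ∀ g, ∀ᶠ i in l, g ∈ A i) (hε : Tendsto ε l (𝓝 0))
    (hV : ∀ i, ((A i * V i).card : ℝ) < (1 + ε i) * (V i).card) :
    IsFoelner G Measure.count l fun i => (V i : Set G) := by
  have hVpos (i : ι) : (0 : ℝ) < (V i).card := by
    rcases (V i).eq_empty_or_nonempty with h | h
    · simpa [h] using hV i
    · exact_mod_cast h.card_pos
  refine ⟨.of_forall fun i => (V i).measurableSet, .of_forall fun i => ?_,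
    .of_forall fun i => ?_, fun g => ?_⟩
  · rw [Measure.count_apply_finset, Nat.cast_ne_zero]
    exact_mod_cast (hVpos i).ne'
  · rw [Measure.count_apply_finset]
    exact ENNReal.natCast_ne_top _
  · have hratio (i : ι) : Measure.count ((g • (V i : Set G)) ∆ V i) / Measure.count (V i : Set G)
        = ENNReal.ofReal (((g • V i) ∆ V i).card / (V i).card) := by
      rw [← Finset.coe_smul_finset, ← Finset.coe_symmDiff, Measure.count_apply_finset,
        Measure.count_apply_finset, ENNReal.ofReal_div_of_pos (hVpos i), ENNReal.ofReal_natCast,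
        ENNReal.ofReal_natCast]
    simp only [hratio]
    rw [← ENNReal.ofReal_zero]
    refine ENNReal.tendsto_ofReal (squeeze_zero' (.of_forall fun i => by positivity) ?_
      (by simpa using hε.const_mul 2))
    filter_upwards [hA g] with i hi
    rw [div_le_iff₀ (hVpos i)]
    have h := hV i
    have hcard : (((g • V i) ∆ V i).card : ℝ) + 2 * (V i).card ≤ 2 * (A i * V i).card := by
      exact_mod_cast card_smul_symmDiff_add_le (hA1 i) hi
    linarith

lemma amenable_of_invariant_mean (m : Set G → ℝ≥0∞) (h_univ : m Set.univ = 1)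
    (h_add : ∀ s t, Disjoint s t → m (s ∪ t) = m s + m t) (h_smul : ∀ (g : G) s, m (g • s) = m s) :
    Amenable G := by
  have h_ne_top (s : Set G) : m s ≠ ∞ := by
    refine ne_top_of_le_ne_top ENNReal.one_ne_top ?_
    rw [← h_univ, ← Set.union_compl_self s, h_add s sᶜ disjoint_compl_right]
    exact le_self_add
  refine ⟨fun s => (m s).toReal, fun _ => ENNReal.toReal_nonneg, by simp [h_univ],
    fun s t hst => ?_, fun g s => ?_⟩
  · simp only [h_add s t hst, ENNReal.toReal_add (h_ne_top s) (h_ne_top t)]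
  · exact congrArg ENNReal.toReal (h_smul g s)

theorem FolnerCondition.amenable (hF : FolnerCondition G) : Amenable G := by
  classical
  let _ : MeasurableSpace G := ⊤
  choose V hV using fun i : Finset G × ℕ =>
    hF (insert 1 i.1) (1 / (i.2 + 1)) Nat.one_div_pos_of_nat
  have hfoel : IsFoelner G Measure.count atTop fun i => (V i : Set G) := by
    refine isFoelner_count (A := fun i => insert 1 i.1) (fun _ => Finset.mem_insert_self 1 _)
      (fun g => ?_)
      (tendsto_one_div_add_atTop_nhds_zero_nat.comp
        (tendsto_snd.mono_left prod_atTop_atTop_eq.ge)) fun i => ?_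
    · filter_upwards [eventually_ge_atTop ({g}, 0)] with i hi
      exact Finset.mem_insert_of_mem (hi.1 (Finset.mem_singleton_self g))
    · simpa only [Finset.ncard_coe_mul, Function.comp_apply] using hV i
  obtain ⟨m, h_univ, h_add, h_smul⟩ := hfoel.amenable
  exact amenable_of_invariant_mean m h_univ (fun s t => h_add s t MeasurableSpace.measurableSet_top)
    h_smul

theorem UniformlyAmenable.folnerCondition (h : UniformlyAmenable G) : FolnerCondition G := by
  obtain ⟨α, hα⟩ := h
  intro A ε hε
  obtain ⟨V, -, hV⟩ := hα A (min ε 1) (lt_min hε one_pos) (min_le_right _ _)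
  exact ⟨V, hV.trans_le (by gcongr; exact min_le_left _ _)⟩

open FirstOrder.Language

namespace GroupLang

def mulTerm {α : Type*} (s t : GroupLang.Term α) : GroupLang.Term α :=
  Term.func (L := GroupLang) (l := 2) () ![s, t]

@[simp] lemma realize_mulTerm {α : Type*} (v : α → G) (s t : GroupLang.Term α) :
    (mulTerm s t).realize v = s.realize v * t.realize v := rfl

noncomputable def productBoundFormula (k j l : ℕ) : GroupLang.Formula (Fin k) :=
  Formula.iExs (Fin j ⊕ Fin l)
    ((Formula.iInf fun q : {q : Fin j × Fin j // q.1 ≠ q.2} =>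
        ∼((var (Sum.inr (Sum.inl q.1.1))).equal (var (Sum.inr (Sum.inl q.1.2))))) ⊓
      Formula.iInf fun q : Fin k × Fin j => Formula.iSup fun t : Fin l =>
        (mulTerm (var (Sum.inl q.1)) (var (Sum.inr (Sum.inl q.2)))).equal
          (var (Sum.inr (Sum.inr t))))

lemma realize_productBoundFormula {k j l : ℕ} (c : Fin k → G) :
    (productBoundFormula k j l).Realize c ↔
      ∃ V : Finset G, V.card = j ∧ (Set.range c * V).ncard ≤ l := by
  refine Iff.trans ?_ (exists_finset_card_eq_iff_exists_injective
    (P := fun V : Set G => (Set.range c * V).ncard ≤ l)).symm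
  simp only [productBoundFormula, Formula.realize_iExs, Formula.realize_inf, Formula.realize_iInf,
    Formula.realize_iSup, Formula.realize_not, Formula.realize_equal, Term.realize_var,
    realize_mulTerm, Sum.exists_sum, Sum.elim_inl, Sum.elim_inr]
  refine exists_congr fun v => ?_
  rw [((Set.finite_range c).mul (Set.finite_range v)).ncard_le_iff_subset_range]
  simp only [Set.mul_subset_iff, Set.forall_mem_range]
  simp only [Set.mem_range, Subtype.forall, Prod.forall]
  constructor
  · rintro ⟨w, hinj, hw⟩
    exact ⟨fun a b hab => by_contra fun hne => hinj a b hne hab, w,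
      fun i i' => (hw i i').imp fun _ => Eq.symm⟩
  · rintro ⟨hinj, w, hw⟩
    exact ⟨w, fun a b hne hab => hne (hinj hab), fun i i' => (hw i i').imp fun _ => Eq.symm⟩

end GroupLang

theorem AlephZeroSaturated.exists_realize_tuple (hsat : AlephZeroSaturated G) {k : ℕ}
    (p : ℕ → GroupLang.Formula (Fin k)) (hp : ∀ N, ∃ a : Fin k → G, ∀ n ≤ N, (p n).Realize a) :
    ∃ a : Fin k → G, ∀ n, (p n).Realize a := by
  induction k with
  | zero =>
    refine ⟨finZeroElim, fun n => ?_⟩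
    obtain ⟨a, ha⟩ := hp n
    exact Subsingleton.elim a finZeroElim ▸ ha n le_rfl
  | succ k ih =>
    let r : ℕ → GroupLang.Formula (Fin k ⊕ Fin 1) := fun n => (p n).relabel finSumFinEquiv.symm
    have hr (n : ℕ) (b : Fin k → G) (x : Fin 1 → G) :
        (r n).Realize (Sum.elim b x) ↔ (p n).Realize (Sum.elim b x ∘ finSumFinEquiv.symm) :=
      Formula.realize_relabel
    let q : ℕ → GroupLang.Formula (Fin k) := fun N =>
      Formula.iExs (Fin 1) (Formula.iInf fun n : Fin (N + 1) => r n)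
    have hq (N : ℕ) (b : Fin k → G) :
        (q N).Realize b ↔ ∃ x : Fin 1 → G, ∀ n ≤ N, (r n).Realize (Sum.elim b x) := by
      simp only [q, Formula.realize_iExs, Formula.realize_iInf]
      exact exists_congr fun x =>
        ⟨fun h n hn => h ⟨n, Nat.lt_succ_of_le hn⟩, fun h n => h n (Nat.le_of_lt_succ n.2)⟩
    obtain ⟨b, hb⟩ := ih q fun N => by
      obtain ⟨a, ha⟩ := hp N
      refine ⟨a ∘ finSumFinEquiv ∘ Sum.inl, fun M hM =>
        (hq M _).2 ⟨a ∘ finSumFinEquiv ∘ Sum.inr, fun n hn => ?_⟩⟩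
      rw [hr, Sum.elim_comp_finSumFinEquiv_symm]
      exact ha n (hn.trans hM)
    obtain ⟨g, hg⟩ := hsat k b r <| exists_forall_mem_of_forall_le fun N => by
      obtain ⟨x, hx⟩ := (hq N b).1 (hb N)
      exact ⟨x 0, fun n hn => by convert hx n hn⟩
    exact ⟨Sum.elim b (fun _ => g) ∘ finSumFinEquiv.symm, fun n => (hr n b _).1 (hg n)⟩

open GroupLang in
theorem FolnerCondition.exists_uniform_bound (hF : FolnerCondition G) (hsat : AlephZeroSaturated G)
    (k : ℕ) {ε : ℝ} (hε : 0 < ε) :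
    ∃ N : ℕ, ∀ c : Fin k → G, ∃ V : Finset G, V.card ≤ N ∧
      ((Set.range c * V).ncard : ℝ) < (1 + ε) * V.card := by
  classical
  by_contra! h
  -- With `(j, l) = m.unpair`, `p m` says that no `j`-element `V` has `|A V| ≤ l`; it is only
  -- imposed when `l < (1 + ε) j`.
  let p : ℕ → GroupLang.Formula (Fin k) := fun m =>
    if (m.unpair.2 : ℝ) < (1 + ε) * m.unpair.1 then ∼(productBoundFormula k m.unpair.1 m.unpair.2)
    else ⊤
  have hp (m : ℕ) (c : Fin k → G) : (p m).Realize c ↔ ((m.unpair.2 : ℝ) < (1 + ε) * m.unpair.1 →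
      ∀ V : Finset G, V.card = m.unpair.1 → m.unpair.2 < (Set.range c * V).ncard) := by
    simp only [p]
    split_ifs with hm <;> simp [hm, realize_productBoundFormula]
  obtain ⟨c, hc⟩ := hsat.exists_realize_tuple p fun N => by
    obtain ⟨c, hc⟩ := h N
    refine ⟨c, fun m hm => (hp m c).2 fun hlt V hV => ?_⟩
    rw [← hV] at hlt
    exact_mod_cast hlt.trans_le (hc V (hV ▸ (Nat.unpair_left_le m).trans hm))
  obtain ⟨V, hV⟩ := hF (Finset.univ.image c) ε hε
  rw [Finset.coe_image, Finset.coe_univ, Set.image_univ] at hV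
  have := (hp (Nat.pair V.card (Set.range c * V).ncard) c).1 (hc _)
  simp only [Nat.unpair_pair] at this
  exact lt_irrefl _ (this hV V rfl)

end

/-- An ℵ₀-saturated group is amenable if and only if it is uniformly amenable. -/
theorem aleph0_saturated_amenable_iff_uniformly_amenable (G : Type*) [Group G]
    (hsat : AlephZeroSaturated G) : Amenable G ↔ UniformlyAmenable G := by
  refine ⟨fun h => ?_, fun h => h.folnerCondition.amenable⟩
  choose N hN using fun (ε : {ε : ℝ // 0 < ε}) (k : ℕ) =>
    h.folnerCondition.exists_uniform_bound hsat k ε.2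
  refine ⟨fun ε k => if hε : 0 < ε then N ⟨ε, hε⟩ k else 0, fun A ε hε _ => ?_⟩
  obtain ⟨V, hVN, hV⟩ := hN ⟨ε, hε⟩ A.card fun i => A.equivFin.symm i
  rw [A.range_coe_equivFin_symm] at hV
  exact ⟨V, by simpa [hε] using hVN, hV⟩
end
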